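/- arXiv:1605.00162 — 3 statements merged into one kernel-verified Lean document; each statement's English description precedes it below -/
import Mathlib

section
/- Let ν be a Borel probability measure on the real line and let α ∈ (0,1]. Assume that for every φ ∈ C_b^∞(ℝ) with ‖φ‖_∞ ≤ 1 one has ∫ φ' dν ≤ C ‖φ'‖_∞^{1-α}. Then for every h ∈ ℝ, the total variation distance between the shift ν_h (defined by ν_h(A) = ν(A - h)) and ν satisfies ‖ν_h − ν‖_TV ≤ 2^{1-α} C |h|^α. -/
open MeasureTheory Real Set Pointwise
open scoped ENNReal RealInnerProductSpace BigOperators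

/-- Sup-norm of a real function. -/
noncomputable def supN (φ : ℝ → ℝ) : ℝ := ⨆ x, |φ x|

/-- Bounded smooth functions on `ℝ` with all derivatives bounded. -/
def CbSmooth (φ : ℝ → ℝ) : Prop :=
  ContDiff ℝ (⊤ : ℕ∞) φ ∧ ∀ k : ℕ, ∃ M : ℝ, ∀ x, |iteratedDeriv k φ x| ≤ M

/-- Total variation distance via smooth test functions. -/
noncomputable def distTV (ν₁ ν₂ : Measure ℝ) : ℝ :=
  ⨆ φ : {φ : ℝ → ℝ // CbSmooth φ ∧ ∀ x, |φ x| ≤ 1},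
    (∫ x, φ.1 x ∂ν₁) - ∫ x, φ.1 x ∂ν₂

/-- Fortet–Mourier distance via smooth test functions. -/
noncomputable def distFM (ν₁ ν₂ : Measure ℝ) : ℝ :=
  ⨆ φ : {φ : ℝ → ℝ // CbSmooth φ ∧ (∀ x, |φ x| ≤ 1) ∧ ∀ x, |deriv φ x| ≤ 1},
    (∫ x, φ.1 x ∂ν₁) - ∫ x, φ.1 x ∂ν₂

/-- A log-concave density on `ℝⁿ`. -/
def LogConcaveFun {n : ℕ} (ρ : EuclideanSpace ℝ (Fin n) → ℝ) : Prop :=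
  (∀ x, 0 ≤ ρ x) ∧
  ∀ x y : EuclideanSpace ℝ (Fin n), ∀ t : ℝ, 0 ≤ t → t ≤ 1 →
    ρ x ^ t * ρ y ^ (1 - t) ≤ ρ (t • x + (1 - t) • y)

/-- A log-concave measure (Borell's characterization). -/
def IsLogConcaveMeasure {E : Type*} [AddCommGroup E] [Module ℝ E] [MeasurableSpace E]
    (μ : Measure E) : Prop :=
  ∀ A B : Set E, ∀ t : ℝ, 0 ≤ t → t ≤ 1 →
    μ A ^ t * μ B ^ (1 - t) ≤ μ (t • A + (1 - t) • B)

/-- Isotropic with isotropic constant 1: mean zero and identity covariance. -/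
def IsIsotropicOne {n : ℕ} (μ : Measure (EuclideanSpace ℝ (Fin n))) : Prop :=
  (∀ θ : EuclideanSpace ℝ (Fin n), ∫ x, ⟪x, θ⟫ ∂μ = 0) ∧
  ∀ θ : EuclideanSpace ℝ (Fin n), ∫ x, ⟪x, θ⟫ ^ 2 ∂μ = ‖θ‖ ^ 2

/-- The constant `c_n(τ) = n ∫_1^∞ t^{n-1} e^{-τ t} dt + 1`. -/
noncomputable def cN (n : ℕ) (τ : ℝ) : ℝ :=
  n * (∫ t in Ioi (1 : ℝ), t ^ (n - 1) * exp (-τ * t)) + 1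

/-- Bounded smooth functions on a normed space with all derivatives bounded. -/
def CbSmoothE {E : Type*} [NormedAddCommGroup E] [NormedSpace ℝ E] (φ : E → ℝ) : Prop :=
  ContDiff ℝ (⊤ : ℕ∞) φ ∧ ∀ k : ℕ, ∃ M : ℝ, ∀ x, ‖iteratedFDeriv ℝ k φ x‖ ≤ M

/-- Integral of a function against a signed measure (via Jordan decomposition). -/
noncomputable def sInt {E : Type*} [MeasurableSpace E] (σ : SignedMeasure E) (φ : E → ℝ) : ℝ :=
  (∫ x, φ x ∂σ.toJordanDecomposition.posPart) - ∫ x, φ x ∂σ.toJordanDecomposition.negPart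

/-- Total variation norm of a signed measure. -/
noncomputable def tvNorm {E : Type*} [MeasurableSpace E] (σ : SignedMeasure E) : ℝ :=
  (σ.totalVariation Set.univ).toReal

/-- `σ` is the Skorohod derivative of `μ` along `h`. -/
def IsSkorohodDeriv {E : Type*} [NormedAddCommGroup E] [NormedSpace ℝ E] [MeasurableSpace E]
    (μ : Measure E) (h : E) (σ : SignedMeasure E) : Prop :=
  ∀ φ : E → ℝ, CbSmoothE φ → ∫ x, fderiv ℝ φ x h ∂μ = - sInt σ φ

/-- Evaluation of a polynomial in `n` variables at a point of `ℝⁿ`. -/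
noncomputable def pev {n : ℕ} (f : MvPolynomial (Fin n) ℝ) (x : EuclideanSpace ℝ (Fin n)) : ℝ :=
  MvPolynomial.eval (fun i => x i) f

/-- Directional derivative `∂_e f` of a polynomial. -/
noncomputable def dirDeriv {n : ℕ} (f : MvPolynomial (Fin n) ℝ)
    (e x : EuclideanSpace ℝ (Fin n)) : ℝ :=
  ∑ i, e i * pev (MvPolynomial.pderiv i f) x

/-- Euclidean norm of the gradient of a polynomial. -/
noncomputable def gradNorm {n : ℕ} (f : MvPolynomial (Fin n) ℝ)
    (x : EuclideanSpace ℝ (Fin n)) : ℝ :=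
  Real.sqrt (∑ i, (pev (MvPolynomial.pderiv i f) x) ^ 2)

/-- Standard deviation of a polynomial under a measure. -/
noncomputable def sigmaF {n : ℕ} (μ : Measure (EuclideanSpace ℝ (Fin n)))
    (f : MvPolynomial (Fin n) ℝ) : ℝ :=
  Real.sqrt (∫ x, (pev f x - ∫ y, pev f y ∂μ) ^ 2 ∂μ)

private lemma contDiff_primitive {φ : ℝ → ℝ} (hφ : ContDiff ℝ (⊤ : ℕ∞) φ) :
    ContDiff ℝ (⊤ : ℕ∞) (fun x => ∫ t in (0:ℝ)..x, φ t) := by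
  have hφc : Continuous φ := hφ.continuous
  set F : ℝ → ℝ := fun x => ∫ t in (0:ℝ)..x, φ t with hFdef
  have hd : deriv F = φ := funext fun x =>
    (intervalIntegral.integral_hasDerivAt_right (hφc.intervalIntegrable _ _)
      (hφc.stronglyMeasurableAtFilter _ _) hφc.continuousAt).deriv
  have hdiff : Differentiable ℝ F := fun x =>
    (intervalIntegral.integral_hasDerivAt_right (hφc.intervalIntegrable _ _)
      (hφc.stronglyMeasurableAtFilter _ _) hφc.continuousAt).differentiableAt
  exact contDiff_infty_iff_deriv.mpr ⟨hdiff, hd ▸ hφ⟩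

private lemma contDiff_top_deriv {f : ℝ → ℝ} (hf : ContDiff ℝ (⊤ : ℕ∞) f) :
    ContDiff ℝ (⊤ : ℕ∞) (deriv f) := by
  exact (contDiff_infty_iff_deriv.mp hf).2

private lemma iterDeriv_cms (c : ℝ) : ∀ (k : ℕ) (f g : ℝ → ℝ), ContDiff ℝ (⊤ : ℕ∞) f → ContDiff ℝ (⊤ : ℕ∞) g →
    iteratedDeriv k (fun x => c * (f x - g x)) =
      fun x => c * (iteratedDeriv k f x - iteratedDeriv k g x) := by
  intro k
  induction k with
  | zero => intro f g _ _; simp [iteratedDeriv_zero]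
  | succ n ih =>
    intro f g hf hg
    rw [iteratedDeriv_succ', iteratedDeriv_succ', iteratedDeriv_succ']
    have hd : deriv (fun x => c * (f x - g x)) = fun x => c * (deriv f x - deriv g x) := by
      funext x
      rw [deriv_const_mul (d := fun x => f x - g x) _ ((hf.differentiable (by simp) x).sub (hg.differentiable (by simp) x)),
        deriv_fun_sub (hf.differentiable (by simp) x) (hg.differentiable (by simp) x)]
    rw [hd]
    exact ih _ _ (contDiff_top_deriv hf) (contDiff_top_deriv hg)

private lemma cbSmooth_neg {f : ℝ → ℝ} (hf : CbSmooth f) : CbSmooth (fun x => -f x) := by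
  refine ⟨hf.1.neg, fun k => ?_⟩
  obtain ⟨M, hM⟩ := hf.2 k
  exact ⟨M, fun x => by rw [iteratedDeriv_fun_neg, abs_neg]; exact hM x⟩

theorem stmt0 (ν : Measure ℝ) [IsProbabilityMeasure ν] (α C : ℝ)
    (hα : 0 < α) (hα1 : α ≤ 1) (hC : 0 < C)
    (hyp : ∀ φ : ℝ → ℝ, CbSmooth φ → (∀ x, |φ x| ≤ 1) →
      (∫ x, deriv φ x ∂ν) ≤ C * supN (deriv φ) ^ (1 - α)) :
    ∀ h : ℝ, distTV (ν.map (fun x => x + h)) ν ≤ 2 ^ (1 - α) * C * |h| ^ α := by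
  intro h
  rcases eq_or_ne h 0 with rfl | hh
  · have hid : (fun x : ℝ => x + 0) = id := funext fun x => add_zero x
    rw [hid, Measure.map_id]
    have hle : distTV ν ν ≤ 0 :=
      Real.iSup_le (fun i => le_of_eq (sub_self _)) le_rfl
    have hz : 2 ^ (1-α) * C * |(0:ℝ)| ^ α = 0 := by
      rw [abs_zero, Real.zero_rpow hα.ne', mul_zero]
    exact hle.trans_eq hz.symm
  have h0 : (0 : ℝ) < |h| := abs_pos.mpr hh
  have hC' : (0:ℝ) ≤ 2 ^ (1-α) * C * |h| ^ α := by positivity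
  refine Real.iSup_le (fun i => ?_) hC'
  obtain ⟨φ, hφsm, hφ1⟩ := i
  obtain ⟨hφtop, hφbd⟩ := hφsm
  have hφc : Continuous φ := hφtop.continuous
  simp only
  -- the antiderivative
  set F : ℝ → ℝ := fun x => ∫ t in (0:ℝ)..x, φ t with hFdef
  have hFsm : ContDiff ℝ (⊤ : ℕ∞) F := contDiff_primitive hφtop
  have hFd : ∀ x, HasDerivAt F (φ x) x := fun x =>
    intervalIntegral.integral_hasDerivAt_right (hφc.intervalIntegrable _ _)
      (hφc.stronglyMeasurableAtFilter _ _) hφc.continuousAt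
  set ψ : ℝ → ℝ := fun x => h⁻¹ * (F (x + h) - F x) with hψdef
  have hFsub : ∀ x : ℝ, F (x + h) - F x = ∫ t in x..(x+h), φ t := fun x =>
    intervalIntegral.integral_interval_sub_left
      (hφc.intervalIntegrable _ _) (hφc.intervalIntegrable _ _)
  have hψ1 : ∀ x, |ψ x| ≤ 1 := by
    intro x
    have hb : ‖∫ t in x..(x+h), φ t‖ ≤ 1 * |x + h - x| :=
      intervalIntegral.norm_integral_le_of_norm_le_const fun t _ => by
        rw [Real.norm_eq_abs]; exact hφ1 t
    rw [Real.norm_eq_abs] at hb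
    have hb' : |F (x + h) - F x| ≤ |h| := by
      rw [hFsub x]
      simpa using hb
    calc |ψ x| = |h|⁻¹ * |F (x + h) - F x| := by rw [hψdef]; simp [abs_mul, abs_inv]
      _ ≤ |h|⁻¹ * |h| := mul_le_mul_of_nonneg_left hb' (by positivity)
      _ = 1 := inv_mul_cancel₀ h0.ne'
  have hψtop : ContDiff ℝ (⊤ : ℕ∞) ψ :=
    contDiff_const.mul ((hFsm.comp (contDiff_id.add contDiff_const)).sub hFsm)
  have hψd : ∀ x, HasDerivAt ψ (h⁻¹ * (φ (x + h) - φ x)) x := by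
    intro x
    have h1 : HasDerivAt (fun x => F (x + h)) (φ (x + h)) x := by
      have := (hFd (x + h)).comp x ((hasDerivAt_id x).add_const h)
      exact (hFd (x + h)).comp_add_const x h
    exact (h1.sub (hFd x)).const_mul h⁻¹
  have hψderiv : deriv ψ = fun x => h⁻¹ * (φ (x + h) - φ x) :=
    funext fun x => (hψd x).deriv
  have hφsh : ContDiff ℝ (⊤ : ℕ∞) (fun x : ℝ => φ (x + h)) :=
    hφtop.comp (contDiff_id.add contDiff_const)
  have hψsm : CbSmooth ψ := by
    refine ⟨hψtop, fun k => ?_⟩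
    match k with
    | 0 => exact ⟨1, fun x => by rw [iteratedDeriv_zero]; exact hψ1 x⟩
    | (k+1) =>
      obtain ⟨M, hM⟩ := hφbd k
      refine ⟨|h⁻¹| * (M + M), fun x => ?_⟩
      rw [iteratedDeriv_succ', hψderiv,
        iterDeriv_cms h⁻¹ k _ _ hφsh hφtop,
        iteratedDeriv_comp_add_const k φ h]
      rw [abs_mul]
      refine mul_le_mul_of_nonneg_left ?_ (abs_nonneg _)
      calc |iteratedDeriv k φ (x + h) - iteratedDeriv k φ x|
          ≤ |iteratedDeriv k φ (x + h)| + |iteratedDeriv k φ x| := abs_sub _ _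
        _ ≤ M + M := add_le_add (hM _) (hM _)
  -- sup norm bound for deriv ψ
  have hds : ∀ x, |deriv ψ x| ≤ 2 / |h| := by
    intro x
    rw [hψderiv]
    calc |h⁻¹ * (φ (x + h) - φ x)| = |h|⁻¹ * |φ (x + h) - φ x| := by
          rw [abs_mul, abs_inv]
      _ ≤ |h|⁻¹ * 2 := by
          refine mul_le_mul_of_nonneg_left ?_ (by positivity)
          calc |φ (x + h) - φ x| ≤ |φ (x + h)| + |φ x| := abs_sub _ _
            _ ≤ 2 := by linarith [hφ1 (x + h), hφ1 x]
      _ = 2 / |h| := by rw [div_eq_mul_inv, mul_comm]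
  have hs2 : supN (deriv ψ) ≤ 2 / |h| := Real.iSup_le hds (by positivity)
  have hs0 : (0:ℝ) ≤ supN (deriv ψ) := Real.iSup_nonneg fun x => abs_nonneg _
  have hrp : supN (deriv ψ) ^ (1 - α) ≤ (2 / |h|) ^ (1 - α) :=
    Real.rpow_le_rpow hs0 hs2 (by linarith)
  set B : ℝ := C * (2 / |h|) ^ (1 - α) with hB
  have hIb : (∫ x, deriv ψ x ∂ν) ≤ B :=
    (hyp ψ hψsm hψ1).trans (mul_le_mul_of_nonneg_left hrp hC.le)
  have hI2 : -(∫ x, deriv ψ x ∂ν) ≤ B := by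
    have hd' : deriv (fun x => -ψ x) = fun x => -(deriv ψ x) := funext fun x => deriv.neg
    have hsupeq : supN (deriv (fun x => -ψ x)) = supN (deriv ψ) := by
      unfold supN
      rw [hd']
      simp only [abs_neg]
    have := hyp (fun x => -ψ x) (cbSmooth_neg hψsm) (fun x => by rw [abs_neg]; exact hψ1 x)
    rw [hsupeq] at this
    have hneg : (∫ x, deriv (fun x => -ψ x) x ∂ν) = -(∫ x, deriv ψ x ∂ν) := by
      rw [hd', integral_neg]
    rw [hneg] at this
    exact this.trans (mul_le_mul_of_nonneg_left hrp hC.le)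
  -- integrals
  have hint2 : Integrable φ ν :=
    ⟨hφc.aestronglyMeasurable, HasFiniteIntegral.of_bounded (C := 1)
      (Filter.Eventually.of_forall fun x => by rw [Real.norm_eq_abs]; exact hφ1 x)⟩
  have hint1 : Integrable (fun x => φ (x + h)) ν :=
    ⟨(hφc.comp (continuous_id.add continuous_const)).aestronglyMeasurable,
      HasFiniteIntegral.of_bounded (C := 1)
      (Filter.Eventually.of_forall fun x => by rw [Real.norm_eq_abs]; exact hφ1 _)⟩
  have hIeq : (∫ x, deriv ψ x ∂ν) = h⁻¹ * ((∫ x, φ (x + h) ∂ν) - ∫ x, φ x ∂ν) := by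
    rw [hψderiv, integral_const_mul, integral_sub hint1 hint2]
  have hmap : (∫ x, φ x ∂(ν.map (fun x => x + h))) = ∫ x, φ (x + h) ∂ν :=
    integral_map (measurable_add_const h).aemeasurable hφc.aestronglyMeasurable
  rw [hmap]
  have hdiff : (∫ x, φ (x + h) ∂ν) - ∫ x, φ x ∂ν = h * ∫ x, deriv ψ x ∂ν := by
    rw [hIeq]
    field_simp
  rw [hdiff]
  have hBnn : (0:ℝ) ≤ B := by positivity
  have habs : h * (∫ x, deriv ψ x ∂ν) ≤ |h| * B := by
    rcases lt_or_gt_of_ne hh with hneg | hpos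
    · rw [abs_of_neg hneg]
      calc h * (∫ x, deriv ψ x ∂ν) = (-h) * (-(∫ x, deriv ψ x ∂ν)) := by ring
        _ ≤ (-h) * B := mul_le_mul_of_nonneg_left hI2 (by linarith)
    · rw [abs_of_pos hpos]
      exact mul_le_mul_of_nonneg_left hIb hpos.le
  refine habs.trans (le_of_eq ?_)
  rw [hB, Real.div_rpow (by norm_num) (abs_nonneg h)]
  have hsplit : |h| ^ α * |h| ^ (1 - α) = |h| := by
    rw [← Real.rpow_add h0]
    norm_num
  have hdiv : |h| / |h| ^ (1 - α) = |h| ^ α := by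
    rw [div_eq_iff (by positivity)]
    exact hsplit.symm
  calc |h| * (C * ((2:ℝ) ^ (1 - α) / |h| ^ (1 - α)))
      = (|h| / |h| ^ (1 - α)) * C * (2:ℝ) ^ (1 - α) := by ring
    _ = 2 ^ (1 - α) * C * |h| ^ α := by rw [hdiv]; ring
end

section
/- Let μ be a log-concave probability measure on ℝ^n with density ρ with respect to Lebesgue measure, let m_ρ = max ρ, let τ > 0, and let K = {x ∈ ℝ^n : ρ(x) ≥ e^{-τ} m_ρ}. Then 1 ≤ m_ρ c_n(τ) |K|, where c_n(τ) = n ∫_1^∞ t^{n-1} e^{-τ t} dt + 1 and |K| is the Lebesgue volume of K. -/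
open MeasureTheory Real Set Pointwise
open scoped ENNReal RealInnerProductSpace BigOperators

section AuxStmt5

open MeasureTheory Real Set Pointwise

private lemma atomInt5 (k : ℕ) {τ : ℝ} (hτ : 0 < τ) {a : ℝ} (ha : 0 ≤ a) :
    IntegrableOn (fun s : ℝ => s ^ k * exp (-τ * s)) (Ioi a) := by
  have h := integrableOn_rpow_mul_exp_neg_mul_rpow (p := 1) (s := (k : ℝ)) (b := τ)
    (neg_one_lt_zero.trans_le (Nat.cast_nonneg k)) zero_lt_one hτ
  have h2 : IntegrableOn (fun s : ℝ => s ^ k * exp (-τ * s)) (Ioi 0) := by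
    refine h.congr_fun (fun x hx => ?_) measurableSet_Ioi
    simp [Real.rpow_natCast, Real.rpow_one, neg_mul]
  exact h2.mono_set (Ioi_subset_Ioi ha)

private lemma tendstoPow5 {τ : ℝ} (hτ : 0 < τ) (k : ℕ) :
    Filter.Tendsto (fun s : ℝ => s ^ k * exp (-τ * s)) Filter.atTop (nhds 0) := by
  have h := ((tendsto_pow_mul_exp_neg_atTop_nhds_zero k).comp
    (Filter.tendsto_id.const_mul_atTop hτ)).const_mul ((τ ^ k)⁻¹)
  rw [mul_zero] at h
  refine h.congr (fun s => ?_)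
  simp only [Function.comp, id_eq]
  rw [mul_pow]
  field_simp

private lemma expDeriv5 {τ : ℝ} (x : ℝ) :
    HasDerivAt (fun s : ℝ => exp (-τ * s)) (-τ * exp (-τ * x)) x := by
  have h : HasDerivAt (fun s : ℝ => -τ * s) (-τ) x := by
    simpa using (hasDerivAt_id x).const_mul (-τ)
  simpa [mul_comm] using h.exp

private lemma calcOne5 (n : ℕ) {τ : ℝ} (hτ : 0 < τ) :
    ∫ s in Ioi (0:ℝ), τ * exp (-τ * s) * (max 1 s) ^ n = cN n τ := by
  have hcont : Continuous (fun s : ℝ => τ * exp (-τ * s) * (max 1 s) ^ n) := by fun_prop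
  have hInt1 : IntegrableOn (fun s : ℝ => τ * exp (-τ * s) * (max 1 s) ^ n) (Ioc 0 1) :=
    hcont.integrableOn_Ioc
  have hInt2 : IntegrableOn (fun s : ℝ => τ * exp (-τ * s) * (max 1 s) ^ n) (Ioi 1) := by
    have base : IntegrableOn (fun s : ℝ => τ * (s ^ n * exp (-τ * s))) (Ioi 1) :=
      (atomInt5 n hτ zero_le_one).const_mul τ
    refine base.congr_fun (fun x hx => ?_) measurableSet_Ioi
    rw [max_eq_right (le_of_lt hx)]; ring
  have hsplit : Ioc (0:ℝ) 1 ∪ Ioi 1 = Ioi 0 := Ioc_union_Ioi_eq_Ioi zero_le_one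
  rw [← hsplit, setIntegral_union (Ioc_disjoint_Ioi le_rfl) measurableSet_Ioi hInt1 hInt2]
  have h1 : ∫ s in Ioc (0:ℝ) 1, τ * exp (-τ * s) * (max 1 s) ^ n = 1 - exp (-τ) := by
    have hcg : ∀ s ∈ Ioc (0:ℝ) 1, τ * exp (-τ * s) * (max 1 s) ^ n = τ * exp (-τ * s) := by
      intro s hs; rw [max_eq_left hs.2, one_pow, mul_one]
    rw [setIntegral_congr_fun measurableSet_Ioc hcg, ← intervalIntegral.integral_of_le zero_le_one]
    have key := intervalIntegral.integral_eq_sub_of_hasDerivAt (a := (0:ℝ)) (b := 1)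
      (f := fun s : ℝ => -exp (-τ * s)) (f' := fun s : ℝ => τ * exp (-τ * s))
      (fun x _ => (expDeriv5 x).neg.congr_deriv (by ring))
      (by apply Continuous.intervalIntegrable; fun_prop)
    rw [key]
    simp only [mul_one, mul_zero, neg_zero, Real.exp_zero]
    ring
  have h2 : ∫ s in Ioi (1:ℝ), τ * exp (-τ * s) * (max 1 s) ^ n
      = exp (-τ) + n * ∫ t in Ioi (1:ℝ), t ^ (n - 1) * exp (-τ * t) := by
    have hcg : ∀ s ∈ Ioi (1:ℝ), τ * exp (-τ * s) * (max 1 s) ^ n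
        = (τ * (s ^ n * exp (-τ * s)) - n * (s ^ (n-1) * exp (-τ * s)))
          + n * (s ^ (n-1) * exp (-τ * s)) := by
      intro s hs; rw [max_eq_right (le_of_lt hs)]; ring
    rw [setIntegral_congr_fun measurableSet_Ioi hcg]
    have hIa : IntegrableOn (fun s : ℝ =>
        τ * (s ^ n * exp (-τ * s)) - n * (s ^ (n-1) * exp (-τ * s))) (Ioi 1) :=
      ((atomInt5 n hτ zero_le_one).const_mul τ).sub
        ((atomInt5 (n-1) hτ zero_le_one).const_mul n)
    have hIb : IntegrableOn (fun s : ℝ => (n:ℝ) * (s ^ (n-1) * exp (-τ * s))) (Ioi 1) :=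
      (atomInt5 (n-1) hτ zero_le_one).const_mul n
    rw [integral_add hIa hIb]
    have hFTC : ∫ s in Ioi (1:ℝ),
        (τ * (s ^ n * exp (-τ * s)) - n * (s ^ (n-1) * exp (-τ * s))) = exp (-τ) := by
      have hder : ∀ x ∈ Ici (1:ℝ), HasDerivAt (fun s : ℝ => -(s ^ n * exp (-τ * s)))
          (τ * (x ^ n * exp (-τ * x)) - n * (x ^ (n-1) * exp (-τ * x))) x := by
        intro x _
        have h1 : HasDerivAt (fun s : ℝ => s ^ n) ((n:ℝ) * x ^ (n-1)) x := hasDerivAt_pow n x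
        have := (h1.mul (expDeriv5 (τ := τ) x)).neg
        exact this.congr_deriv (by ring)
      have htt : Filter.Tendsto (fun s : ℝ => -(s ^ n * exp (-τ * s)))
          Filter.atTop (nhds 0) := by
        simpa using (tendstoPow5 hτ n).neg
      have := integral_Ioi_of_hasDerivAt_of_tendsto' hder hIa htt
      rw [this]; simp
    rw [hFTC, integral_const_mul]
  rw [h1, h2, cN]; ring

/-- The auxiliary function in the layer-cake bound. -/
private noncomputable def gfun (n : ℕ) (τ m : ℝ) (t : ℝ) : ℝ :=
  (max 1 (Real.log (m / t) / τ)) ^ n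

private lemma image_eq5 {τ m : ℝ} (hτ : 0 < τ) (hm : 0 < m) :
    (fun s : ℝ => m * exp (-τ * s)) '' (Ioi 0) = Ioo 0 m := by
  ext t
  constructor
  · rintro ⟨s, hs, rfl⟩
    constructor
    · positivity
    · have : exp (-τ * s) < 1 := by
        rw [Real.exp_lt_one_iff]
        have : 0 < τ * s := mul_pos hτ hs
        linarith
      calc m * exp (-τ * s) < m * 1 := by nlinarith
        _ = m := mul_one m
  · rintro ⟨ht0, htm⟩
    refine ⟨Real.log (m / t) / τ, ?_, ?_⟩
    · have h1 : 1 < m / t := (one_lt_div ht0).mpr htm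
      exact div_pos (Real.log_pos h1) hτ
    · show m * exp (-τ * (Real.log (m / t) / τ)) = t
      have he : -τ * (Real.log (m / t) / τ) = -Real.log (m / t) := by field_simp
      rw [he, Real.exp_neg, Real.exp_log (by positivity)]
      field_simp

private lemma gcomp5 {τ m : ℝ} (hτ : 0 < τ) (hm : 0 < m) (n : ℕ) (s : ℝ) :
    gfun n τ m (m * exp (-τ * s)) = (max 1 s) ^ n := by
  unfold gfun
  congr 2
  have h : m / (m * exp (-τ * s)) = exp (τ * s) := by
    rw [neg_mul, Real.exp_neg]; field_simp
  rw [h, Real.log_exp, mul_comm, mul_div_assoc, div_self (ne_of_gt hτ), mul_one]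

private lemma fDeriv5 {τ m : ℝ} (s : ℝ) :
    HasDerivAt (fun s : ℝ => m * exp (-τ * s)) (m * (-τ * exp (-τ * s))) s := by
  have h : HasDerivAt (fun u : ℝ => -τ * u) (-τ) s := by
    simpa using (hasDerivAt_id s).const_mul (-τ)
  have := h.exp.const_mul m
  exact this.congr_deriv (by ring)

private lemma intOn05 (n : ℕ) {τ : ℝ} (hτ : 0 < τ) :
    IntegrableOn (fun s : ℝ => τ * exp (-τ * s) * (max 1 s) ^ n) (Ioi 0) := by
  have hcont : Continuous (fun s : ℝ => τ * exp (-τ * s) * (max 1 s) ^ n) := by fun_prop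
  have hInt1 : IntegrableOn (fun s : ℝ => τ * exp (-τ * s) * (max 1 s) ^ n) (Ioc 0 1) :=
    hcont.integrableOn_Ioc
  have hInt2 : IntegrableOn (fun s : ℝ => τ * exp (-τ * s) * (max 1 s) ^ n) (Ioi 1) := by
    have base : IntegrableOn (fun s : ℝ => τ * (s ^ n * exp (-τ * s))) (Ioi 1) :=
      (atomInt5 n hτ zero_le_one).const_mul τ
    refine base.congr_fun (fun x hx => ?_) measurableSet_Ioi
    rw [max_eq_right (le_of_lt hx)]; ring
  have hsplit : Ioc (0:ℝ) 1 ∪ Ioi 1 = Ioi 0 := Ioc_union_Ioi_eq_Ioi zero_le_one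
  rw [← hsplit]
  exact hInt1.union hInt2

private lemma calcTwo5 (n : ℕ) {τ m : ℝ} (hτ : 0 < τ) (hm : 0 < m) :
    IntegrableOn (gfun n τ m) (Ioo 0 m) ∧
      ∫ t in Ioo 0 m, gfun n τ m t = m * cN n τ := by
  set f : ℝ → ℝ := fun s => m * exp (-τ * s) with hf
  set f' : ℝ → ℝ := fun s => m * (-τ * exp (-τ * s)) with hf'
  have hder : ∀ x ∈ Ioi (0:ℝ), HasDerivWithinAt f (f' x) (Ioi 0) x :=
    fun x _ => (fDeriv5 x).hasDerivWithinAt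
  have hinj : InjOn f (Ioi 0) := by
    intro a _ b _ hab
    have h1 : exp (-τ * a) = exp (-τ * b) := by
      simp only [hf] at hab
      exact mul_left_cancel₀ (ne_of_gt hm) hab
    have h2 : -τ * a = -τ * b := Real.exp_injective h1
    exact mul_left_cancel₀ (by simpa using ne_of_gt hτ) h2
  have himg : f '' (Ioi 0) = Ioo 0 m := image_eq5 hτ hm
  have heq : ∀ x : ℝ, |f' x| • gfun n τ m (f x) = m * (τ * exp (-τ * x) * (max 1 x) ^ n) := by
    intro x
    rw [smul_eq_mul, gcomp5 hτ hm, hf', abs_mul, abs_of_pos hm, abs_mul, abs_neg,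
      abs_of_pos hτ, abs_of_pos (Real.exp_pos _)]
    ring
  have hrhsInt : IntegrableOn (fun x => |f' x| • gfun n τ m (f x)) (Ioi 0) := by
    have base : IntegrableOn (fun x => m * (τ * exp (-τ * x) * (max 1 x) ^ n)) (Ioi 0) :=
      (intOn05 n hτ).const_mul m
    exact base.congr_fun (fun x _ => (heq x).symm) measurableSet_Ioi
  constructor
  · rw [← himg]
    exact (integrableOn_image_iff_integrableOn_abs_deriv_smul measurableSet_Ioi hder hinj
      (gfun n τ m)).mpr hrhsInt
  · rw [← himg, integral_image_eq_integral_abs_deriv_smul measurableSet_Ioi hder hinj]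
    rw [setIntegral_congr_fun measurableSet_Ioi (fun x _ => heq x), integral_const_mul,
      calcOne5 n hτ]

private lemma incl5 {n : ℕ} {ρ : EuclideanSpace ℝ (Fin n) → ℝ} (hρ : LogConcaveFun ρ)
    {m τ : ℝ} (hm : 0 < m) {x₀ : EuclideanSpace ℝ (Fin n)} (hx₀ : ρ x₀ = m)
    {s : ℝ} (hs : 1 ≤ s) {x : EuclideanSpace ℝ (Fin n)} (hx : m * exp (-τ * s) ≤ ρ x) :
    x ∈ (fun y => x₀ + s • (y - x₀)) '' {z | exp (-τ) * m ≤ ρ z} := by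
  have hs0 : 0 < s := lt_of_lt_of_le one_pos hs
  set θ : ℝ := 1 / s with hθ
  have hθ0 : 0 < θ := by positivity
  have hθ1 : θ ≤ 1 := by rw [hθ, div_le_one hs0]; exact hs
  set y := θ • x + (1 - θ) • x₀ with hy
  have hρy : m * exp (-τ) ≤ ρ y := by
    have h1 : ρ x ^ θ * ρ x₀ ^ (1 - θ) ≤ ρ y := hρ.2 x x₀ θ hθ0.le hθ1
    have h2 : (m * exp (-τ * s)) ^ θ ≤ ρ x ^ θ :=
      Real.rpow_le_rpow (by positivity) hx hθ0.le
    have h3 : (m * exp (-τ * s)) ^ θ * m ^ (1 - θ) = m * exp (-τ) := by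
      rw [Real.mul_rpow hm.le (Real.exp_pos _).le, ← Real.exp_mul]
      have : -τ * s * θ = -τ := by
        rw [hθ]; field_simp
      rw [this, mul_assoc, mul_comm (exp (-τ)), ← mul_assoc, ← Real.rpow_add hm]
      simp
    calc m * exp (-τ) = (m * exp (-τ * s)) ^ θ * m ^ (1 - θ) := h3.symm
      _ = (m * exp (-τ * s)) ^ θ * ρ x₀ ^ (1 - θ) := by rw [hx₀]
      _ ≤ ρ x ^ θ * ρ x₀ ^ (1 - θ) := by
          apply mul_le_mul_of_nonneg_right h2 (Real.rpow_nonneg (hρ.1 x₀) _)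
      _ ≤ ρ y := h1
  refine ⟨y, by rwa [mul_comm] at hρy, ?_⟩
  show x₀ + s • (y - x₀) = x
  have hyx : y - x₀ = θ • (x - x₀) := by rw [hy]; module
  rw [hyx, smul_smul, hθ, mul_one_div, div_self (ne_of_gt hs0), one_smul]
  abel

private lemma volImage5 {n : ℕ} (x₀ : EuclideanSpace ℝ (Fin n)) {s : ℝ} (hs : 0 ≤ s)
    (K : Set (EuclideanSpace ℝ (Fin n))) :
    volume ((fun y => x₀ + s • (y - x₀)) '' K) = ENNReal.ofReal (s ^ n) * volume K := by
  have hcomp : (fun y : EuclideanSpace ℝ (Fin n) => x₀ + s • (y - x₀))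
      = (fun z => (x₀ - s • x₀) +ᵥ z) ∘ (fun y => s • y) := by
    funext y
    simp only [Function.comp_apply, vadd_eq_add, smul_sub]
    abel
  rw [hcomp, image_comp, Set.image_vadd, Set.image_smul, measure_vadd,
    Measure.addHaar_smul_of_nonneg _ hs, finrank_euclideanSpace_fin]

private lemma aemeas5 {n : ℕ} {ρ : EuclideanSpace ℝ (Fin n) → ℝ}
    (hconv : ∀ t : ℝ, Convex ℝ {x | t ≤ ρ x}) : AEMeasurable ρ volume := by
  have hnm : NullMeasurable ρ (volume : Measure (EuclideanSpace ℝ (Fin n))) := by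
    have hmeas : @Measurable (NullMeasurableSpace (EuclideanSpace ℝ (Fin n)) volume) ℝ _ _ ρ := by
      apply measurable_of_Ici
      intro t
      have h := (hconv t).nullMeasurableSet (μ := (volume : Measure (EuclideanSpace ℝ (Fin n))))
      exact h
    exact fun s hs => hmeas hs
  exact hnm.aemeasurable

end AuxStmt5

theorem stmt5 (n : ℕ) (ρ : EuclideanSpace ℝ (Fin n) → ℝ) (m τ : ℝ) (hτ : 0 < τ)
    (hρ : LogConcaveFun ρ) (hmax : IsGreatest (Set.range ρ) m)
    (hprob : IsProbabilityMeasure (volume.withDensity fun x => ENNReal.ofReal (ρ x))) :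
    1 ≤ m * cN n τ * (volume {x | exp (-τ) * m ≤ ρ x}).toReal := by
  classical
  obtain ⟨x₀, hx₀⟩ := hmax.1
  have hρ0 := hρ.1
  -- m is positive
  have hm0 : 0 < m := by
    by_contra hcon
    push_neg at hcon
    have hz : ∀ x, ρ x = 0 := fun x =>
      le_antisymm ((hmax.2 (Set.mem_range_self x)).trans hcon) (hρ0 x)
    have h0 : (volume.withDensity fun x => ENNReal.ofReal (ρ x)) Set.univ = 0 := by
      rw [withDensity_apply _ MeasurableSet.univ]
      simp [hz]
    have h1 : (volume.withDensity fun x => ENNReal.ofReal (ρ x)) Set.univ = 1 := measure_univ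
    rw [h0] at h1
    exact zero_ne_one h1
  -- superlevel sets are convex
  have hconv : ∀ t : ℝ, Convex ℝ {x : EuclideanSpace ℝ (Fin n) | t ≤ ρ x} := by
    intro t x hx y hy a b ha hb hab
    show t ≤ ρ (a • x + b • y)
    rcases le_or_gt t 0 with ht | ht
    · exact ht.trans (hρ0 _)
    · have hb' : b = 1 - a := by linarith
      have hkey := hρ.2 x y a ha (by linarith)
      have h1 : t ^ a * t ^ (1 - a) ≤ ρ x ^ a * ρ y ^ (1 - a) :=
        mul_le_mul (Real.rpow_le_rpow ht.le hx ha)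
          (Real.rpow_le_rpow ht.le hy (by linarith))
          (Real.rpow_nonneg ht.le _) (Real.rpow_nonneg (hρ0 x) _)
      have h2 : t ^ a * t ^ (1 - a) = t := by
        rw [← Real.rpow_add ht]; simp
      rw [hb']
      calc t = t ^ a * t ^ (1 - a) := h2.symm
        _ ≤ ρ x ^ a * ρ y ^ (1 - a) := h1
        _ ≤ ρ (a • x + (1 - a) • y) := hkey
  have hmeasρ : AEMeasurable ρ volume := aemeas5 hconv
  set K : Set (EuclideanSpace ℝ (Fin n)) := {x | exp (-τ) * m ≤ ρ x} with hK
  have hKnull : NullMeasurableSet K volume :=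
    (hconv (exp (-τ) * m)).nullMeasurableSet (μ := (volume : Measure (EuclideanSpace ℝ (Fin n))))
  -- total mass is one
  have one_eq : ∫⁻ x, ENNReal.ofReal (ρ x) = 1 := by
    have h1 : (volume.withDensity fun x => ENNReal.ofReal (ρ x)) Set.univ = 1 := measure_univ
    rwa [withDensity_apply _ MeasurableSet.univ, Measure.restrict_univ] at h1
  -- layer cake
  have layer : (1 : ℝ≥0∞) = ∫⁻ t in Ioi (0:ℝ), volume {a | t ≤ ρ a} := by
    rw [← one_eq]
    exact lintegral_eq_lintegral_meas_le volume (Filter.Eventually.of_forall hρ0) hmeasρ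
  -- pointwise bound on superlevel set volumes
  have hbound : ∀ t ∈ Ioc (0:ℝ) m,
      volume {a | t ≤ ρ a} ≤ volume K * ENNReal.ofReal (gfun n τ m t) := by
    intro t ht
    have hg1 : (1:ℝ) ≤ gfun n τ m t := one_le_pow₀ (le_max_left _ _)
    rcases le_or_gt (m * exp (-τ)) t with hcase | hcase
    · have hsub : {a | t ≤ ρ a} ⊆ K := by
        intro a ha
        have hmc : exp (-τ) * m ≤ t := by rwa [mul_comm]
        exact le_trans hmc ha
      calc volume {a | t ≤ ρ a} ≤ volume K := measure_mono hsub
        _ = volume K * 1 := (mul_one _).symm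
        _ ≤ volume K * ENNReal.ofReal (gfun n τ m t) := by
            exact mul_le_mul_right (by simpa using ENNReal.ofReal_le_ofReal hg1) _
    · set s : ℝ := Real.log (m / t) / τ with hsdef
      have hs1 : 1 ≤ s := by
        rw [hsdef, le_div_iff₀ hτ, one_mul]
        have hmt : exp τ < m / t := by
          rw [lt_div_iff₀ ht.1]
          calc exp τ * t < exp τ * (m * exp (-τ)) := by
                apply mul_lt_mul_of_pos_left hcase (Real.exp_pos τ)
            _ = m := by
                rw [← mul_assoc, mul_comm (exp τ) m, mul_assoc, ← Real.exp_add]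
                simp
        calc τ = Real.log (exp τ) := (Real.log_exp τ).symm
          _ ≤ Real.log (m / t) := Real.log_le_log (Real.exp_pos τ) hmt.le
      have hteq : t = m * exp (-τ * s) := by
        have he : -τ * s = -Real.log (m / t) := by rw [hsdef]; field_simp
        rw [he, Real.exp_neg, Real.exp_log (div_pos hm0 ht.1)]
        field_simp
      have hsub : {a | t ≤ ρ a} ⊆ (fun y => x₀ + s • (y - x₀)) '' K := by
        intro a ha
        exact incl5 hρ hm0 hx₀ hs1 (by rw [← hteq]; exact ha)
      have hgt : gfun n τ m t = s ^ n := by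
        unfold gfun
        rw [← hsdef, max_eq_right hs1]
      calc volume {a | t ≤ ρ a} ≤ volume ((fun y => x₀ + s • (y - x₀)) '' K) :=
            measure_mono hsub
        _ = ENNReal.ofReal (s ^ n) * volume K :=
            volImage5 x₀ (le_trans zero_le_one hs1) K
        _ = volume K * ENNReal.ofReal (gfun n τ m t) := by rw [hgt, mul_comm]
  -- the superlevel set K has finite volume
  have hKfin : volume K ≠ ⊤ := by
    intro htop
    have hle : ENNReal.ofReal (exp (-τ) * m) * volume K ≤ 1 := by
      calc ENNReal.ofReal (exp (-τ) * m) * volume K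
          = ∫⁻ _ in K, ENNReal.ofReal (exp (-τ) * m) := (setLIntegral_const _ _).symm
        _ ≤ ∫⁻ x in K, ENNReal.ofReal (ρ x) := by
            apply lintegral_mono_ae
            filter_upwards [ae_restrict_mem₀ hKnull] with x hx
            exact ENNReal.ofReal_le_ofReal hx
        _ ≤ ∫⁻ x, ENNReal.ofReal (ρ x) := setLIntegral_le_lintegral _ _
        _ = 1 := one_eq
    rw [htop, ENNReal.mul_top (by
      simp only [ne_eq, ENNReal.ofReal_eq_zero, not_le]
      positivity)] at hle
    exact (lt_irrefl _ (lt_of_le_of_lt hle (by norm_num))).elim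
  -- gfun is measurable and nonneg
  have hgmeas : Measurable (fun t => ENNReal.ofReal (gfun n τ m t)) := by
    apply ENNReal.measurable_ofReal.comp
    unfold gfun
    exact ((measurable_const.max ((Real.measurable_log.comp
      (measurable_const.div measurable_id)).div_const τ)).pow_const n)
  -- main chain of inequalities in ℝ≥0∞
  have main : (1 : ℝ≥0∞) ≤ volume K * ENNReal.ofReal (m * cN n τ) := by
    have hsplit : Ioc (0:ℝ) m ∪ Ioi m = Ioi 0 := Ioc_union_Ioi_eq_Ioi hm0.le
    have hzero : ∫⁻ t in Ioi m, volume {a | t ≤ ρ a} = 0 := by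
      have : ∀ t ∈ Ioi m, volume {a | t ≤ ρ a} = 0 := by
        intro t ht
        have : {a : EuclideanSpace ℝ (Fin n) | t ≤ ρ a} = ∅ := by
          apply Set.eq_empty_iff_forall_notMem.mpr
          intro a ha
          exact absurd (le_trans ha (hmax.2 (Set.mem_range_self a))) (not_le.mpr ht)
        rw [this, measure_empty]
      calc ∫⁻ t in Ioi m, volume {a | t ≤ ρ a}
          = ∫⁻ _ in Ioi m, 0 := setLIntegral_congr_fun measurableSet_Ioi
            this
        _ = 0 := lintegral_zero
    calc (1 : ℝ≥0∞) = ∫⁻ t in Ioi (0:ℝ), volume {a | t ≤ ρ a} := layer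
      _ = ∫⁻ t in Ioc (0:ℝ) m ∪ Ioi m, volume {a | t ≤ ρ a} := by rw [hsplit]
      _ = (∫⁻ t in Ioc (0:ℝ) m, volume {a | t ≤ ρ a})
          + ∫⁻ t in Ioi m, volume {a | t ≤ ρ a} := by
            rw [lintegral_union measurableSet_Ioi (Ioc_disjoint_Ioi le_rfl)]
      _ = ∫⁻ t in Ioc (0:ℝ) m, volume {a | t ≤ ρ a} := by rw [hzero, add_zero]
      _ ≤ ∫⁻ t in Ioc (0:ℝ) m, volume K * ENNReal.ofReal (gfun n τ m t) :=
            setLIntegral_mono (by exact (hgmeas.const_mul _)) hbound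
      _ = volume K * ∫⁻ t in Ioc (0:ℝ) m, ENNReal.ofReal (gfun n τ m t) :=
            lintegral_const_mul _ hgmeas
      _ = volume K * ∫⁻ t in Ioo (0:ℝ) m, ENNReal.ofReal (gfun n τ m t) := by
            rw [setLIntegral_congr Ioo_ae_eq_Ioc.symm]
      _ = volume K * ENNReal.ofReal (∫ t in Ioo (0:ℝ) m, gfun n τ m t) := by
            rw [ofReal_integral_eq_lintegral_ofReal (calcTwo5 n hτ hm0).1
              (Filter.Eventually.of_forall (fun t => by unfold gfun; positivity))]
      _ = volume K * ENNReal.ofReal (m * cN n τ) := by rw [(calcTwo5 n hτ hm0).2]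
  -- convert to reals
  have hcN : 0 ≤ cN n τ := by
    have hB : 0 ≤ ∫ t in Ioi (1:ℝ), t ^ (n - 1) * exp (-τ * t) := by
      apply setIntegral_nonneg measurableSet_Ioi
      intro t ht
      have ht0 : (0:ℝ) ≤ t := le_trans zero_le_one (le_of_lt ht)
      exact mul_nonneg (pow_nonneg ht0 _) (Real.exp_pos _).le
    unfold cN
    positivity
  have hfin : volume K * ENNReal.ofReal (m * cN n τ) ≠ ⊤ :=
    ENNReal.mul_ne_top hKfin ENNReal.ofReal_ne_top
  have := ENNReal.toReal_mono hfin main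
  rw [ENNReal.toReal_one, ENNReal.toReal_mul, ENNReal.toReal_ofReal (mul_nonneg hm0.le hcN)] at this
  calc (1:ℝ) ≤ (volume K).toReal * (m * cN n τ) := this
    _ = m * cN n τ * (volume K).toReal := by ring
end

section
/- Let μ be an isotropic log-concave probability measure on ℝ^n with density ρ and isotropic constant 1, let m_ρ = max ρ, let τ > 0, and let K = {x : ρ(x) ≥ e^{-τ} m_ρ}. Then every point x ∈ K satisfies |x|² ≤ c_n(τ)(n+1)² e^τ, where c_n(τ) = n ∫_1^∞ t^{n-1} e^{-τ t} dt + 1. -/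
open MeasureTheory Real Set Pointwise
open scoped ENNReal RealInnerProductSpace BigOperators

set_option maxHeartbeats 1000000

section helperLemmas
open Filter

lemma tendsto_pow_exp_neg (τ : ℝ) (hτ : 0 < τ) (k : ℕ) :
    Tendsto (fun t : ℝ => t ^ k * exp (-τ * t)) atTop (nhds 0) := by
  have h1 : Tendsto (fun t : ℝ => τ * t) atTop atTop :=
    Tendsto.const_mul_atTop hτ tendsto_id
  have h2 := (tendsto_pow_mul_exp_neg_atTop_nhds_zero k).comp h1
  have h3 : Tendsto (fun t : ℝ => (τ⁻¹) ^ k * ((τ * t) ^ k * exp (-(τ * t))))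
      atTop (nhds ((τ⁻¹) ^ k * 0)) := h2.const_mul _
  rw [mul_zero] at h3
  refine h3.congr' ?_
  filter_upwards [eventually_gt_atTop 0] with t ht
  have : (τ * t) ^ k = τ ^ k * t ^ k := mul_pow _ _ _
  rw [this]
  field_simp
  ring_nf
  rw [← mul_pow, mul_inv_cancel₀ hτ.ne', one_pow]

lemma hasDerivAt_aux (τ : ℝ) (k : ℕ) (t : ℝ) :
    HasDerivAt (fun t : ℝ => -(t ^ (k+1) * exp (-τ * t)))
      (τ * (t ^ (k+1) * exp (-τ * t)) - (k+1) * (t ^ k * exp (-τ * t))) t := by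
  have h1 : HasDerivAt (fun t : ℝ => t ^ (k+1)) ((k+1) * t ^ k) t := by
    simpa using (hasDerivAt_pow (k+1) t)
  have hin : HasDerivAt (fun y : ℝ => -τ * y) (-τ) t := by
    simpa using (hasDerivAt_id t).const_mul (-τ)
  have h2 : HasDerivAt (fun t : ℝ => exp (-τ * t)) (exp (-τ * t) * (-τ)) t := hin.exp
  have := ((h1.mul h2).neg : HasDerivAt (fun t : ℝ => -(t ^ (k+1) * exp (-τ * t))) _ t)
  refine this.congr_deriv ?_
  push_cast
  ring

lemma integrableOn_pow_exp_neg (τ : ℝ) (hτ : 0 < τ) (k : ℕ) :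
    IntegrableOn (fun t : ℝ => t ^ k * exp (-τ * t)) (Ioi 1) volume := by
  induction k with
  | zero => simpa using exp_neg_integrableOn_Ioi 1 hτ
  | succ k ih =>
    set T : ℝ := max 1 ((k + 1 : ℝ) / τ) with hT
    have hT1 : (1:ℝ) ≤ T := le_max_left _ _
    have hg : ∀ t ∈ Ioi T, HasDerivAt (fun t : ℝ => -(t ^ (k+1) * exp (-τ * t)))
        (τ * (t ^ (k+1) * exp (-τ * t)) - (k+1) * (t ^ k * exp (-τ * t))) t :=
      fun t _ => hasDerivAt_aux τ k t
    have hnn : ∀ t ∈ Ioi T, 0 ≤ τ * (t ^ (k+1) * exp (-τ * t)) - (k+1) * (t ^ k * exp (-τ * t)) := by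
      intro t ht
      have htpos : (0:ℝ) < t := lt_of_lt_of_le one_pos (le_trans hT1 (le_of_lt ht))
      have h1 : (k+1 : ℝ) / τ ≤ T := le_max_right _ _
      have h2 : (k+1 : ℝ) ≤ τ * t := by
        rw [div_le_iff₀ hτ] at h1
        nlinarith [mul_lt_mul_of_pos_left (show T < t from ht) hτ]
      have h3 : (0:ℝ) < exp (-τ * t) := exp_pos _
      have h5 : (0:ℝ) ≤ t ^ k := pow_nonneg htpos.le _
      have h6 : (k+1:ℝ) * (t ^ k * exp (-τ * t)) ≤ (τ * t) * (t ^ k * exp (-τ * t)) :=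
        mul_le_mul_of_nonneg_right h2 (mul_nonneg h5 h3.le)
      have h7 : τ * (t ^ (k+1) * exp (-τ * t)) = (τ * t) * (t ^ k * exp (-τ * t)) := by ring
      linarith
    have hcontg : Continuous (fun t : ℝ => -(t ^ (k+1) * exp (-τ * t))) := by fun_prop
    have htend : Tendsto (fun t : ℝ => -(t ^ (k+1) * exp (-τ * t))) atTop (nhds 0) := by
      simpa using (tendsto_pow_exp_neg τ hτ (k+1)).neg
    have hint := integrableOn_Ioi_deriv_of_nonneg hcontg.continuousWithinAt hg hnn htend
    have ihT : IntegrableOn (fun t : ℝ => t ^ k * exp (-τ * t)) (Ioi T) volume :=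
      ih.mono_set (Ioi_subset_Ioi hT1)
    have h6 : IntegrableOn (fun t : ℝ => τ * (t ^ (k+1) * exp (-τ * t))) (Ioi T) volume := by
      have h := hint.add (ihT.const_mul ((k:ℝ)+1))
      exact h.congr (Filter.Eventually.of_forall (fun t => by simp only [Pi.add_apply]; ring))
    have h7 : IntegrableOn (fun t : ℝ => t ^ (k+1) * exp (-τ * t)) (Ioi T) volume := by
      have h := h6.const_mul τ⁻¹
      have heq : (fun t : ℝ => t ^ (k+1) * exp (-τ * t))
          = fun t : ℝ => τ⁻¹ * (τ * (t ^ (k+1) * exp (-τ * t))) := by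
        funext t; field_simp
      rw [heq]; exact h
    have h8 : IntegrableOn (fun t : ℝ => t ^ (k+1) * exp (-τ * t)) (Ioc 1 T) volume :=
      (ContinuousOn.integrableOn_Icc (by fun_prop)).mono_set Ioc_subset_Icc_self
    have := h8.union h7
    rwa [Ioc_union_Ioi_eq_Ioi hT1] at this

lemma ibp_exp (τ : ℝ) (hτ : 0 < τ) (k : ℕ) :
    τ * ∫ t in Ioi (1:ℝ), t ^ (k+1) * exp (-τ * t)
      = exp (-τ) + (k+1) * ∫ t in Ioi (1:ℝ), t ^ k * exp (-τ * t) := by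
  have hg : ∀ t ∈ Ioi (1:ℝ), HasDerivAt (fun t : ℝ => -(t ^ (k+1) * exp (-τ * t)))
      (τ * (t ^ (k+1) * exp (-τ * t)) - (k+1) * (t ^ k * exp (-τ * t))) t :=
    fun t _ => hasDerivAt_aux τ k t
  have hcontg : Continuous (fun t : ℝ => -(t ^ (k+1) * exp (-τ * t))) := by fun_prop
  have htend : Tendsto (fun t : ℝ => -(t ^ (k+1) * exp (-τ * t))) atTop (nhds 0) := by
    simpa using (tendsto_pow_exp_neg τ hτ (k+1)).neg
  have hint : IntegrableOn (fun t : ℝ =>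
      τ * (t ^ (k+1) * exp (-τ * t)) - (k+1) * (t ^ k * exp (-τ * t))) (Ioi 1) volume :=
    ((integrableOn_pow_exp_neg τ hτ (k+1)).const_mul τ).sub
      ((integrableOn_pow_exp_neg τ hτ k).const_mul ((k:ℝ)+1))
  have h := integral_Ioi_of_hasDerivAt_of_tendsto hcontg.continuousWithinAt hg hint htend
  rw [integral_sub ((integrableOn_pow_exp_neg τ hτ (k+1)).const_mul τ)
      ((integrableOn_pow_exp_neg τ hτ k).const_mul ((k:ℝ)+1)),
      integral_const_mul, integral_const_mul] at h
  simp only [one_pow, mul_one, zero_sub, neg_neg, neg_mul] at h ⊢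
  linarith

lemma one_sub_pow_le' (s : ℝ) (h0 : 0 ≤ s) (h1 : s ≤ 1) (k : ℕ) :
    1 - s ^ k ≤ k * (1 - s) := by
  induction k with
  | zero => simp
  | succ k ih =>
    have hs : s ^ (k+1) = s * s ^ k := by ring
    have hp : s ^ k ≤ 1 := pow_le_one₀ h0 h1
    push_cast
    nlinarith

lemma alg_key (n : ℕ) (hn : 1 ≤ n) (r Vr I1 I2 : ℝ) (hV : 0 < Vr)
    (hCS : I1^2 ≤ I2 * Vr)
    (H : ∀ s : ℝ, 0 < s → s < 1 → ∀ c : ℝ,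
      s ^ n * (((1-s)*r - c)^2 * Vr + 2*((1-s)*r - c)*s*I1 + s^2*I2) ≤ I2 - 2*c*I1 + c^2*Vr) :
    r ^ 2 * Vr ≤ (n+1)^2 * I2 := by
  have hn1 : (1:ℝ) ≤ (n:ℝ) := by exact_mod_cast hn
  set a : ℝ := I1 / Vr with ha
  set b : ℝ := I2 / Vr with hb
  set W : ℝ := b - a^2 with hW
  set R : ℝ := r - a with hR
  have hI1 : I1 = a * Vr := by rw [ha]; field_simp
  have hI2 : I2 = b * Vr := by rw [hb]; field_simp
  have hb' : b = W + a^2 := by simp [hW]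
  -- normalized inequality
  have Hn : ∀ s : ℝ, 0 < s → s < 1 → ∀ u : ℝ,
      s ^ n * (((1-s)*R - u)^2 + s^2 * W) ≤ u^2 + W := by
    intro s hs0 hs1 u
    have h := H s hs0 hs1 (a + u)
    rw [hI1, hI2] at h
    have h2 : s ^ n * ((((1-s)*R - u)^2 + s^2 * W) * Vr) ≤ (u^2 + W) * Vr := by
      calc s ^ n * ((((1-s)*R - u)^2 + s^2 * W) * Vr)
          = s ^ n * (((1-s)*r - (a+u))^2 * Vr + 2*((1-s)*r - (a+u))*s*(a*Vr) + s^2*(b*Vr)) := by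
            simp only [hW, hR]; ring
        _ ≤ b*Vr - 2*(a+u)*(a*Vr) + (a+u)^2*Vr := h
        _ = (u^2 + W) * Vr := by simp only [hW]; ring
    have h3 : (s ^ n * (((1-s)*R - u)^2 + s^2 * W)) * Vr ≤ (u^2 + W) * Vr := by linarith
    exact le_of_mul_le_mul_right h3 hV
  have hWnn : 0 ≤ W := by
    have h0 : 0 ≤ I2 * Vr - I1^2 := by linarith
    have : W = (I2 * Vr - I1^2) / Vr^2 := by
      rw [hW, hb, ha]; field_simp
    rw [this]
    positivity
  -- main step : R^2 ≤ n(n+2) W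
  have key : R^2 ≤ (n * (n+2) : ℝ) * W := by
    have hstep : ∀ s : ℝ, 0 < s → s < 1 → s ^ n * R^2 ≤ (n * (n+2) : ℝ) * W := by
      intro s hs0 hs1
      have hp : 0 < 1 - s ^ n := by
        have : s ^ n < 1 := pow_lt_one₀ hs0.le hs1 (by omega)
        linarith
      have hq : 0 < 1 - s ^ (n+2) := by
        have : s ^ (n+2) < 1 := pow_lt_one₀ hs0.le hs1 (by omega)
        linarith
      set u : ℝ := -(s^n * (1-s) * R) / (1 - s^n) with hu
      have h := Hn s hs0 hs1 u
      have hid : s ^ n * ((1-s)*R - u)^2 - u^2 = s^n * (1-s)^2 * R^2 / (1 - s^n) := by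
        rw [hu]
        field_simp
        ring
      have hpow' : s^n * (s^2 * W) = s^(n+2) * W := by rw [← mul_assoc, ← pow_add]
      have h' : s^n * ((1-s)*R - u)^2 + s^(n+2) * W ≤ u^2 + W := by
        rw [mul_add, hpow'] at h; exact h
      have h2 : s^n * (1-s)^2 * R^2 / (1 - s^n) ≤ W * (1 - s^(n+2)) := by
        rw [← hid]; linarith [h']
      have hple : 1 - s^n ≤ n * (1-s) := one_sub_pow_le' s hs0.le hs1.le n
      have hqle : 1 - s^(n+2) ≤ ((n:ℝ)+2) * (1-s) := by
        have := one_sub_pow_le' s hs0.le hs1.le (n+2); push_cast at this; linarith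
      have hs1' : 0 < 1 - s := by linarith
      have h3 : s^n * (1-s)^2 * R^2 ≤ W * (1 - s^(n+2)) * (1 - s^n) := by
        rw [div_le_iff₀ hp] at h2
        linarith
      have h4 : W * (1 - s^(n+2)) * (1 - s^n) ≤ W * (((n:ℝ)+2) * (1-s)) * ((n:ℝ) * (1-s)) := by
        have e1 : W * (1 - s^(n+2)) ≤ W * (((n:ℝ)+2)*(1-s)) := mul_le_mul_of_nonneg_left hqle hWnn
        have e2 : 0 ≤ W * (((n:ℝ)+2)*(1-s)) := by positivity
        calc W * (1 - s^(n+2)) * (1 - s^n) ≤ W * (((n:ℝ)+2)*(1-s)) * (1 - s^n) :=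
              mul_le_mul_of_nonneg_right e1 hp.le
          _ ≤ W * (((n:ℝ)+2)*(1-s)) * ((n:ℝ) * (1-s)) := mul_le_mul_of_nonneg_left hple e2
      have h6 : (s^n * R^2) * (1-s)^2 ≤ ((n*(n+2):ℝ) * W) * (1-s)^2 := by push_cast; nlinarith [h3, h4]
      exact le_of_mul_le_mul_right h6 (by positivity)
    have htend : Tendsto (fun s : ℝ => s ^ n * R^2) (nhdsWithin 1 (Iio 1)) (nhds (R^2)) := by
      have hc : ContinuousAt (fun s : ℝ => s ^ n * R^2) 1 := by fun_prop
      have h := hc.tendsto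
      simp only [one_pow, one_mul] at h
      exact h.mono_left nhdsWithin_le_nhds
    refine le_of_tendsto htend ?_
    filter_upwards [Ioo_mem_nhdsLT_of_mem (show (1:ℝ) ∈ Ioc 0 1 by norm_num)] with s hs
    exact hstep s hs.1 hs.2
  -- conclusion
  have hKpos : (0:ℝ) < (n:ℝ)*((n:ℝ)+2) := by nlinarith
  have hmul := mul_le_mul_of_nonneg_left key (show (0:ℝ) ≤ (n:ℝ)*((n:ℝ)+2)+1 by nlinarith)
  have hR2 : R^2 = (r-a)^2 := by rw [hR]
  have hide : ((n:ℝ)*((n:ℝ)+2)) * (((n:ℝ)*((n:ℝ)+2)+1)*b - r^2)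
      = ((n:ℝ)*((n:ℝ)+2)+1) * (((n:ℝ)*((n:ℝ)+2))*W - (r-a)^2)
        + (((n:ℝ)*((n:ℝ)+2)+1)*a - r)^2 := by rw [hb']; ring
  have h8 : 0 ≤ ((n:ℝ)*((n:ℝ)+2)) * (((n:ℝ)*((n:ℝ)+2)+1)*b - r^2) := by
    rw [hide]
    have t1 : 0 ≤ ((n:ℝ)*((n:ℝ)+2))*W - (r-a)^2 := by rw [← hR2]; linarith [key]
    have t2 : (0:ℝ) ≤ ((n:ℝ)*((n:ℝ)+2)+1) := by linarith
    exact add_nonneg (mul_nonneg t2 t1) (sq_nonneg _)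
  have h9 : 0 ≤ ((n:ℝ)*((n:ℝ)+2)+1)*b - r^2 := (mul_nonneg_iff_of_pos_left hKpos).mp h8
  have hfin : ((n:ℝ)*((n:ℝ)+2)+1) = ((n:ℝ)+1)^2 := by ring
  rw [hI2]
  calc r^2 * Vr ≤ (((n:ℝ)*((n:ℝ)+2)+1)*b) * Vr :=
        mul_le_mul_of_nonneg_right (by linarith) hV.le
    _ = ((n:ℝ)+1)^2 * (b * Vr) := by rw [hfin]; ring



section geom
variable {n : ℕ} {ρ : EuclideanSpace ℝ (Fin n) → ℝ}

lemma superlevel_convex (hρ : LogConcaveFun ρ) {c : ℝ} (hc : 0 < c) :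
    Convex ℝ {y | c ≤ ρ y} := by
  intro y hy z hz p q hp hq hpq
  have hq' : q = 1 - p := by linarith
  have h := hρ.2 y z p hp (by linarith)
  have h1 : c ^ (p : ℝ) ≤ ρ y ^ (p : ℝ) := Real.rpow_le_rpow hc.le hy hp
  have h2 : c ^ ((1:ℝ) - p) ≤ ρ z ^ ((1:ℝ) - p) := Real.rpow_le_rpow hc.le hz (by linarith)
  have h3 : c ^ (p:ℝ) * c ^ ((1:ℝ)-p) = c := by
    rw [← Real.rpow_add hc]; simp
  have h4 : c ≤ ρ y ^ (p:ℝ) * ρ z ^ ((1:ℝ)-p) := by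
    calc c = c ^ (p:ℝ) * c ^ ((1:ℝ)-p) := h3.symm
      _ ≤ ρ y ^ (p:ℝ) * ρ z ^ ((1:ℝ)-p) :=
        mul_le_mul h1 h2 (Real.rpow_nonneg hc.le _) (Real.rpow_nonneg (hρ.1 y) _)
  have : c ≤ ρ (p • y + (1-p) • z) := le_trans h4 h
  rw [hq']
  exact this

lemma logconcave_aemeasurable (hρ : LogConcaveFun ρ) : AEMeasurable ρ (volume) := by
  have hconv : ∀ c : ℝ, NullMeasurableSet (ρ ⁻¹' Ici c) volume := by
    intro c
    rcases le_or_gt c 0 with hc | hc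
    · have : ρ ⁻¹' Ici c = univ := eq_univ_of_forall (fun y => le_trans hc (hρ.1 y))
      rw [this]; exact MeasurableSet.univ.nullMeasurableSet
    · have : ρ ⁻¹' Ici c = {y | c ≤ ρ y} := rfl
      rw [this]
      exact (superlevel_convex hρ hc).nullMeasurableSet _
  have hnm : NullMeasurable ρ (volume) :=
    @measurable_of_Ici ℝ (NullMeasurableSpace (EuclideanSpace ℝ (Fin n)) volume) _ _ _ _ _ _ _ ρ hconv
  exact hnm.aemeasurable

end geom

theorem stmt6_main (n : ℕ) (ρ : EuclideanSpace ℝ (Fin n) → ℝ) (m τ : ℝ) (hτ : 0 < τ)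
    (hρ : LogConcaveFun ρ) (hmax : IsGreatest (Set.range ρ) m)
    (hprob : IsProbabilityMeasure (volume.withDensity fun x => ENNReal.ofReal (ρ x)))
    (hiso : (∀ θ : EuclideanSpace ℝ (Fin n), ∫ x, ⟪x, θ⟫ ^ 2
        ∂(volume.withDensity fun x => ENNReal.ofReal (ρ x)) = ‖θ‖ ^ 2)) :
    ∀ x : EuclideanSpace ℝ (Fin n), exp (-τ) * m ≤ ρ x →
      ‖x‖ ^ 2 ≤ cN n τ * (n + 1) ^ 2 * exp τ := by
  classical
  intro x hx
  obtain ⟨x₀, hx₀⟩ := hmax.1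
  have hub : ∀ y, ρ y ≤ m := fun y => hmax.2 ⟨y, rfl⟩
  have hnn := hρ.1
  have htot : ∫⁻ y, ENNReal.ofReal (ρ y) = 1 := by
    have h := hprob.measure_univ
    rwa [withDensity_apply _ MeasurableSet.univ, Measure.restrict_univ] at h
  have hm : 0 < m := by
    by_contra hmneg
    push_neg at hmneg
    have hz : ∀ y, ρ y = 0 := fun y => le_antisymm (le_trans (hub y) hmneg) (hnn y)
    rw [show (fun y => ENNReal.ofReal (ρ y)) = fun _ => 0 from funext fun y => by simp [hz y]] at htot
    simp at htot
  have hJnn : 0 ≤ ∫ t in Ioi (1:ℝ), t ^ (n-1) * exp (-τ * t) :=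
    setIntegral_nonneg measurableSet_Ioi (fun t ht =>
      mul_nonneg (pow_nonneg (by linarith [mem_Ioi.mp ht] : (0:ℝ) ≤ t) _) (exp_pos _).le)
  have hcN_pos : 0 < cN n τ := by
    rw [cN]
    have : (0:ℝ) ≤ (n:ℝ) := Nat.cast_nonneg n
    nlinarith
  rcases Nat.eq_zero_or_pos n with hn0 | hn
  · subst hn0
    have hx0 : x = 0 := Subsingleton.elim x 0
    rw [hx0, norm_zero]
    have : (0:ℝ) ≤ cN 0 τ * (0 + 1) ^ 2 * exp τ := by positivity
    simpa using this
  -- main case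
  have hρae : AEMeasurable ρ volume := logconcave_aemeasurable hρ
  set K : Set (EuclideanSpace ℝ (Fin n)) := {y | exp (-τ) * m ≤ ρ y} with hKdef
  have hexpτ1 : exp (-τ) < 1 := by
    calc exp (-τ) < exp 0 := Real.exp_lt_exp.mpr (by linarith)
      _ = 1 := Real.exp_zero
  have hKconv : Convex ℝ K := superlevel_convex hρ (by positivity)
  have hKnm : NullMeasurableSet K volume := hKconv.nullMeasurableSet _
  have hxK : x ∈ K := hx
  have hx₀K : x₀ ∈ K := by
    show exp (-τ) * m ≤ ρ x₀
    rw [hx₀]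
    nlinarith
  set V : ℝ≥0∞ := volume K with hVdef
  have hee : exp τ * exp (-τ) = 1 := by rw [← Real.exp_add]; simp
  -- V is finite
  have hVle : V ≤ ENNReal.ofReal (exp τ / m) := by
    have hpt : ∀ y ∈ K, (1:ℝ≥0∞) ≤ ENNReal.ofReal (exp τ / m) * ENNReal.ofReal (ρ y) := by
      intro y hy
      rw [← ENNReal.ofReal_mul (div_pos (exp_pos τ) hm).le, ← ENNReal.ofReal_one]
      apply ENNReal.ofReal_le_ofReal
      have h1 : exp (-τ) * m ≤ ρ y := hy
      have h2 : exp τ / m * (exp (-τ) * m) ≤ exp τ / m * ρ y :=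
        mul_le_mul_of_nonneg_left h1 (by positivity)
      have h3 : exp τ / m * (exp (-τ) * m) = 1 := by
        field_simp
        rw [hee]
      linarith
    calc V = ∫⁻ _ in K, 1 ∂volume := (setLIntegral_one K).symm
      _ ≤ ∫⁻ y in K, ENNReal.ofReal (exp τ / m) * ENNReal.ofReal (ρ y) ∂volume := by
          apply lintegral_mono_ae
          filter_upwards [ae_restrict_mem₀ hKnm] with y hy using hpt y hy
      _ = ENNReal.ofReal (exp τ / m) * ∫⁻ y in K, ENNReal.ofReal (ρ y) ∂volume :=
          lintegral_const_mul' _ _ ENNReal.ofReal_ne_top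
      _ ≤ ENNReal.ofReal (exp τ / m) * ∫⁻ y, ENNReal.ofReal (ρ y) ∂volume := by
          gcongr
          exact Measure.restrict_le_self
      _ = ENNReal.ofReal (exp τ / m) := by rw [htot, mul_one]
  have hVlt : V < ⊤ := lt_of_le_of_lt hVle ENNReal.ofReal_lt_top
  -- superlevel set volume bound
  have hsuper : ∀ t : ℝ, 1 ≤ t →
      volume {y | m * exp (-τ * t) < ρ y} ≤ ENNReal.ofReal (t ^ n) * V := by
    intro t ht
    have ht0 : (0:ℝ) < t := lt_of_lt_of_le one_pos ht
    have htinv : t⁻¹ ≤ 1 := by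
      rw [inv_le_one_iff₀]
      right; exact ht
    have hsubset : {y | m * exp (-τ * t) < ρ y} ⊆ (AffineMap.homothety x₀ t) '' K := by
      intro y hy
      refine ⟨x₀ + t⁻¹ • (y - x₀), ?_, ?_⟩
      · have hexpr : x₀ + t⁻¹ • (y - x₀) = t⁻¹ • y + (1 - t⁻¹) • x₀ := by
          rw [smul_sub, sub_smul, one_smul]
          abel
        show exp (-τ) * m ≤ ρ (x₀ + t⁻¹ • (y - x₀))
        rw [hexpr]
        have h := hρ.2 y x₀ t⁻¹ (by positivity) htinv
        refine le_trans ?_ h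
        have hy' : m * exp (-τ * t) ≤ ρ y := le_of_lt hy
        have hmy : (0:ℝ) < m * exp (-τ * t) := by positivity
        have h1 : (m * exp (-τ * t)) ^ (t⁻¹ : ℝ) ≤ ρ y ^ (t⁻¹ : ℝ) :=
          Real.rpow_le_rpow hmy.le hy' (by positivity)
        have h2 : (m * exp (-τ * t)) ^ (t⁻¹:ℝ) = m ^ (t⁻¹:ℝ) * exp (-τ) := by
          rw [Real.mul_rpow hm.le (exp_pos _).le, ← Real.exp_mul]
          congr 2
          field_simp
        have h3 : ρ x₀ ^ ((1:ℝ) - t⁻¹) = m ^ ((1:ℝ) - t⁻¹) := by rw [hx₀]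
        have h4 : m ^ (t⁻¹:ℝ) * m ^ ((1:ℝ)-t⁻¹) = m := by
          rw [← Real.rpow_add hm]; simp
        have h6 : exp (-τ) * m = ((m * exp (-τ * t)) ^ (t⁻¹:ℝ)) * m ^ ((1:ℝ)-t⁻¹) := by
          rw [h2]
          calc exp (-τ) * m = exp (-τ) * (m ^ (t⁻¹:ℝ) * m ^ ((1:ℝ)-t⁻¹)) := by rw [h4]
            _ = m ^ (t⁻¹:ℝ) * exp (-τ) * m ^ ((1:ℝ)-t⁻¹) := by ring
        rw [h6, ← h3]
        exact mul_le_mul_of_nonneg_right h1 (Real.rpow_nonneg (hnn x₀) _)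
      · show AffineMap.homothety x₀ t (x₀ + t⁻¹ • (y - x₀)) = y
        rw [AffineMap.homothety_apply]
        simp only [vadd_eq_add, vsub_eq_sub]
        rw [add_sub_cancel_left, smul_inv_smul₀ (ne_of_gt ht0)]
        abel
    calc volume {y | m * exp (-τ * t) < ρ y}
        ≤ volume ((AffineMap.homothety x₀ t) '' K) := measure_mono hsubset
      _ = ENNReal.ofReal |t ^ (Module.finrank ℝ (EuclideanSpace ℝ (Fin n)))| * volume K :=
          Measure.addHaar_image_homothety _ _ _ _
      _ = ENNReal.ofReal (t ^ n) * V := by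
          rw [finrank_euclideanSpace_fin, abs_of_nonneg (pow_nonneg ht0.le _), hVdef]
  -- layer cake bound
  have one_le : (1:ℝ≥0∞) ≤ ENNReal.ofReal (m * cN n τ) * V := by
    set b : ℝ := exp (-τ) * m with hbdef
    have hb0 : 0 < b := by positivity
    have hbm : b < m := by nlinarith
    have hbm2 : exp τ * b = m := by rw [hbdef, ← mul_assoc, hee, one_mul]
    set J : ℝ := ∫ t in Ioi (1:ℝ), t ^ (n-1) * exp (-τ * t) with hJdef
    have hibp : τ * ∫ t in Ioi (1:ℝ), t ^ n * exp (-τ * t) = exp (-τ) + n * J := by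
      have hk := ibp_exp τ hτ (n-1)
      rw [Nat.sub_add_cancel hn] at hk
      have hc : ((n-1:ℕ):ℝ) + 1 = (n:ℝ) := by
        rw [Nat.cast_sub hn]; ring
      rw [hc] at hk
      exact hk
    have hlayer : (1:ℝ≥0∞) = ∫⁻ lam in Ioi (0:ℝ), volume {y | lam < ρ y} := by
      rw [← htot]
      exact lintegral_eq_lintegral_meas_lt volume (ae_of_all _ hnn) hρae
    have hA3 : ∫⁻ lam in Ioi m, volume {y | lam < ρ y} = 0 := by
      have hz : ∀ lam ∈ Ioi m, volume {y | lam < ρ y} = (fun _ => (0:ℝ≥0∞)) lam := by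
        intro lam hlam
        have he : {y | lam < ρ y} = (∅ : Set (EuclideanSpace ℝ (Fin n))) := by
          ext y; simp only [mem_setOf_eq, mem_empty_iff_false, iff_false, not_lt]
          exact le_trans (hub y) (le_of_lt hlam)
        simp [he]
      rw [setLIntegral_congr_fun measurableSet_Ioi hz]
      simp
    have hA2 : ∫⁻ lam in Ioc b m, volume {y | lam < ρ y} ≤ ENNReal.ofReal (m - b) * V := by
      have hle : ∀ lam ∈ Ioc b m, volume {y | lam < ρ y} ≤ (fun _ => V) lam := by
        intro lam hlam
        rw [hVdef]
        apply measure_mono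
        intro y hy
        show exp (-τ) * m ≤ ρ y
        have h1 : b < ρ y := lt_trans hlam.1 hy
        rw [hbdef] at h1
        linarith
      calc ∫⁻ lam in Ioc b m, volume {y | lam < ρ y}
          ≤ ∫⁻ _ in Ioc b m, V := setLIntegral_mono measurable_const hle
        _ = V * volume (Ioc b m) := setLIntegral_const _ _
        _ = ENNReal.ofReal (m - b) * V := by rw [Real.volume_Ioc, mul_comm]
    -- change of variables pieces
    have hder : ∀ lam ∈ Ioi (1:ℝ), HasDerivWithinAt (fun t : ℝ => m * exp (-τ * t))
        (m * exp (-τ * lam) * (-τ)) (Ioi 1) lam := by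
      intro lam _
      have hin : HasDerivAt (fun u : ℝ => -τ * u) (-τ) lam := by
        simpa using (hasDerivAt_id lam).const_mul (-τ)
      have h2 : HasDerivAt (fun u : ℝ => m * exp (-τ * u)) (m * (exp (-τ * lam) * (-τ))) lam :=
        hin.exp.const_mul m
      exact (by simpa [mul_assoc] using h2 :
        HasDerivAt (fun t : ℝ => m * exp (-τ * t)) (m * exp (-τ * lam) * (-τ)) lam).hasDerivWithinAt
    have hinj : InjOn (fun t : ℝ => m * exp (-τ * t)) (Ioi 1) := by
      apply StrictAntiOn.injOn
      intro s1 hs1 u hu hsu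
      have h1 : exp (-τ * u) < exp (-τ * s1) :=
        Real.exp_lt_exp.mpr (by nlinarith [mul_pos hτ (show (0:ℝ) < u - s1 by linarith)])
      exact mul_lt_mul_of_pos_left h1 hm
    have himg : (fun t : ℝ => m * exp (-τ * t)) '' (Ioi 1) = Ioo 0 b := by
      ext lam
      constructor
      · rintro ⟨t, ht, rfl⟩
        have ht' : (1:ℝ) < t := ht
        constructor
        · positivity
        · rw [hbdef]
          have h1 : exp (-τ * t) < exp (-τ) :=
            Real.exp_lt_exp.mpr (by nlinarith [mul_pos hτ (show (0:ℝ) < t - 1 by linarith)])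
          calc m * exp (-τ * t) < m * exp (-τ) := mul_lt_mul_of_pos_left h1 hm
            _ = b := by rw [hbdef]; ring
      · intro hlam
        refine ⟨Real.log (m / lam) / τ, ?_, ?_⟩
        · show 1 < Real.log (m/lam) / τ
          rw [lt_div_iff₀ hτ, one_mul]
          have h1 : exp τ < m / lam := by
            rw [lt_div_iff₀ hlam.1]
            nlinarith [mul_lt_mul_of_pos_left hlam.2 (exp_pos τ), hbm2]
          calc τ = Real.log (exp τ) := (Real.log_exp τ).symm
            _ < Real.log (m / lam) := Real.log_lt_log (exp_pos τ) h1
        · show m * exp (-τ * (Real.log (m/lam)/τ)) = lam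
          have harg : -τ * (Real.log (m/lam)/τ) = - Real.log (m/lam) := by field_simp
          rw [harg, Real.exp_neg, Real.exp_log (div_pos hm hlam.1)]
          field_simp
    have hF := integral_image_eq_integral_abs_deriv_smul measurableSet_Ioi hder hinj
      (fun lam => (Real.log (m/lam)/τ)^n)
    rw [himg] at hF
    have hptF : ∀ t ∈ Ioi (1:ℝ),
        |m * exp (-τ * t) * (-τ)| • ((Real.log (m/(m * exp (-τ * t)))/τ)^n)
          = (m * τ) * (t^n * exp (-τ * t)) := by
      intro t ht
      have hdiv : m / (m * exp (-τ * t)) = exp (τ * t) := by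
        rw [show -τ*t = -(τ*t) by ring, Real.exp_neg]
        field_simp
      have habs : |m * exp (-τ * t) * (-τ)| = m * τ * exp (-τ * t) := by
        rw [abs_of_nonpos (by nlinarith [mul_pos (mul_pos hm (exp_pos (-τ*t))) hτ] :
          m * exp (-τ*t) * (-τ) ≤ 0)]
        ring
      rw [hdiv, Real.log_exp, habs, smul_eq_mul]
      rw [show τ * t / τ = t by field_simp]
      ring
    have hRHSeq : ∫ t in Ioi (1:ℝ), |m * exp (-τ * t) * (-τ)| • ((Real.log (m/(m * exp (-τ * t)))/τ)^n)
        = ∫ t in Ioi (1:ℝ), (m * τ) * (t^n * exp (-τ * t)) :=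
      setIntegral_congr_fun measurableSet_Ioi (fun t ht => hptF t ht)
    have hIorig : IntegrableOn (fun t : ℝ =>
        |m * exp (-τ * t) * (-τ)| • ((Real.log (m/(m * exp (-τ * t)))/τ)^n)) (Ioi 1) volume := by
      apply IntegrableOn.congr_fun ((integrableOn_pow_exp_neg τ hτ n).const_mul (m*τ))
        (fun t ht => (hptF t ht).symm) measurableSet_Ioi
    have hFint : IntegrableOn (fun lam => (Real.log (m/lam)/τ)^n) (Ioo 0 b) volume := by
      rw [← himg]
      exact (integrableOn_image_iff_integrableOn_abs_deriv_smul measurableSet_Ioi hder hinj _).mpr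
        hIorig
    have hFIoc : IntegrableOn (fun lam => (Real.log (m/lam)/τ)^n) (Ioc 0 b) volume := by
      have hae : (Ioo (0:ℝ) b : Set ℝ) =ᵐ[volume] Ioc (0:ℝ) b := Ioo_ae_eq_Ioc
      unfold IntegrableOn
      rwa [← Measure.restrict_congr_set hae]
    have hFval : ∫ lam in Ioc (0:ℝ) b, (Real.log (m/lam)/τ)^n ∂volume
        ≤ m * (exp (-τ) + n * J) := by
      have e1 : ∫ lam in Ioc (0:ℝ) b, (Real.log (m/lam)/τ)^n ∂volume
          = ∫ lam in Ioo (0:ℝ) b, (Real.log (m/lam)/τ)^n ∂volume :=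
        setIntegral_congr_set Ioo_ae_eq_Ioc.symm
      have e2 : m * τ * ∫ t in Ioi (1:ℝ), t^n * exp (-τ*t) = m * (exp (-τ) + n * J) := by
        rw [mul_assoc, hibp]
      rw [e1, hF, hRHSeq, integral_const_mul]
      linarith [e2]
    have hA1 : ∫⁻ lam in Ioc (0:ℝ) b, volume {y | lam < ρ y}
        ≤ ENNReal.ofReal (m * (exp (-τ) + n * J)) * V := by
      have hbound : ∀ lam ∈ Ioc (0:ℝ) b, volume {y | lam < ρ y}
          ≤ (fun lam => ENNReal.ofReal ((Real.log (m/lam)/τ)^n) * V) lam := by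
        intro lam hlam
        have h0 : 0 < lam := hlam.1
        have ht1 : 1 ≤ Real.log (m/lam)/τ := by
          rw [le_div_iff₀ hτ, one_mul]
          have h1 : exp τ ≤ m / lam := by
            rw [le_div_iff₀ h0]
            nlinarith [mul_le_mul_of_nonneg_left hlam.2 (exp_pos τ).le, hbm2]
          calc τ = Real.log (exp τ) := (Real.log_exp τ).symm
            _ ≤ Real.log (m / lam) := Real.log_le_log (exp_pos τ) h1
        have hlameq : m * exp (-τ * (Real.log (m/lam)/τ)) = lam := by
          rw [show -τ*(Real.log (m/lam)/τ) = -(Real.log (m/lam)) by field_simp,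
            Real.exp_neg, Real.exp_log (div_pos hm h0)]
          field_simp
        calc volume {y | lam < ρ y}
            = volume {y | m * exp (-τ * (Real.log (m/lam)/τ)) < ρ y} := by rw [hlameq]
          _ ≤ ENNReal.ofReal ((Real.log (m/lam)/τ)^n) * V := hsuper _ ht1
      have hnnF : 0 ≤ᵐ[volume.restrict (Ioc (0:ℝ) b)] fun lam => (Real.log (m/lam)/τ)^n := by
        filter_upwards [ae_restrict_mem measurableSet_Ioc] with lam hlam
        have h1 : (1:ℝ) ≤ m / lam := by
          rw [le_div_iff₀ hlam.1, one_mul]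
          linarith [hlam.2]
        have h2 : 0 ≤ Real.log (m/lam) := Real.log_nonneg h1
        positivity
      calc ∫⁻ lam in Ioc (0:ℝ) b, volume {y | lam < ρ y}
          ≤ ∫⁻ lam in Ioc (0:ℝ) b, ENNReal.ofReal ((Real.log (m/lam)/τ)^n) * V :=
            setLIntegral_mono
              (((((Real.measurable_log.comp (measurable_const.div measurable_id)).div_const
                τ).pow_const n).ennreal_ofReal).mul_const V) hbound
        _ = (∫⁻ lam in Ioc (0:ℝ) b, ENNReal.ofReal ((Real.log (m/lam)/τ)^n)) * V :=
            lintegral_mul_const' V _ hVlt.ne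
        _ ≤ ENNReal.ofReal (m * (exp (-τ) + n * J)) * V := by
            gcongr
            rw [← ofReal_integral_eq_lintegral_ofReal hFIoc hnnF]
            exact ENNReal.ofReal_le_ofReal hFval
    -- combine
    have hsplit : (1:ℝ≥0∞) ≤ (∫⁻ lam in Ioc (0:ℝ) b, volume {y | lam < ρ y})
        + (∫⁻ lam in Ioc b m, volume {y | lam < ρ y})
        + ∫⁻ lam in Ioi m, volume {y | lam < ρ y} := by
      rw [hlayer]
      have hsub : Ioi (0:ℝ) ⊆ (Ioc 0 b ∪ Ioc b m) ∪ Ioi m := by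
        intro lam hl
        rcases le_or_gt lam b with h | h
        · exact Or.inl (Or.inl ⟨hl, h⟩)
        · rcases le_or_gt lam m with h2 | h2
          · exact Or.inl (Or.inr ⟨h, h2⟩)
          · exact Or.inr h2
      calc ∫⁻ lam in Ioi (0:ℝ), volume {y | lam < ρ y}
          ≤ ∫⁻ lam in (Ioc (0:ℝ) b ∪ Ioc b m) ∪ Ioi m, volume {y | lam < ρ y} :=
            lintegral_mono_set hsub
        _ ≤ (∫⁻ lam in Ioc (0:ℝ) b ∪ Ioc b m, volume {y | lam < ρ y})
              + ∫⁻ lam in Ioi m, volume {y | lam < ρ y} :=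
            lintegral_union_le _ _ _
        _ ≤ (∫⁻ lam in Ioc (0:ℝ) b, volume {y | lam < ρ y})
              + (∫⁻ lam in Ioc b m, volume {y | lam < ρ y})
              + ∫⁻ lam in Ioi m, volume {y | lam < ρ y} :=
            add_le_add_left (lintegral_union_le _ _ _) _
    have hsum : ENNReal.ofReal (m * (exp (-τ) + n * J)) * V + ENNReal.ofReal (m - b) * V
        = ENNReal.ofReal (m * cN n τ) * V := by
      rw [← add_mul, ← ENNReal.ofReal_add
        (mul_nonneg hm.le (add_nonneg (exp_pos (-τ)).le
          (mul_nonneg (Nat.cast_nonneg n) hJnn)) : (0:ℝ) ≤ m * (exp (-τ) + n * J))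
        (by linarith : (0:ℝ) ≤ m - b)]
      congr 2
      rw [cN, ← hJdef, hbdef]
      ring
    calc (1:ℝ≥0∞) ≤ _ := hsplit
      _ ≤ ENNReal.ofReal (m * (exp (-τ) + n * J)) * V + ENNReal.ofReal (m - b) * V + 0 :=
          add_le_add (add_le_add hA1 hA2) (le_of_eq hA3)
      _ = ENNReal.ofReal (m * cN n τ) * V := by rw [add_zero, hsum]
  -- real versions
  set Vr : ℝ := V.toReal with hVrdef
  have hVne0 : V ≠ 0 := by
    intro h0
    rw [h0, mul_zero] at one_le
    simp at one_le
  have hVr_pos : 0 < Vr := ENNReal.toReal_pos hVne0 hVlt.ne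
  have hmcV : 1 ≤ m * cN n τ * Vr := by
    have h := ENNReal.toReal_mono
      (ENNReal.mul_ne_top ENNReal.ofReal_ne_top hVlt.ne) one_le
    rwa [ENNReal.toReal_one, ENNReal.toReal_mul, ENNReal.toReal_ofReal (by positivity)] at h
  -- direction
  by_cases hx0 : ‖x‖ = 0
  · rw [hx0]
    have : (0:ℝ) ≤ cN n τ * ((n:ℝ) + 1) ^ 2 * exp τ := by positivity
    simpa using this
  have hr : 0 < ‖x‖ := lt_of_le_of_ne (norm_nonneg x) (Ne.symm hx0)
  set r : ℝ := ‖x‖ with hrdef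
  set θ : EuclideanSpace ℝ (Fin n) := r⁻¹ • x with hθdef
  have hθ : ‖θ‖ = 1 := by
    rw [hθdef, norm_smul, norm_inv, Real.norm_eq_abs, abs_of_nonneg hr.le]
    field_simp
    exact hrdef.symm
  set ℓ : EuclideanSpace ℝ (Fin n) → ℝ := fun y => ⟪y, θ⟫ with hℓdef
  have hcont : Continuous ℓ := continuous_id.inner continuous_const
  have hlx : ℓ x = r := by
    rw [hℓdef]
    show ⟪x, r⁻¹ • x⟫ = r
    rw [real_inner_smul_right, real_inner_self_eq_norm_sq]
    rw [hrdef]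
    field_simp
  have hvar : ∫ y, ℓ y ^ 2 ∂(volume.withDensity fun z => ENNReal.ofReal (ρ z)) = 1 := by
    have h := hiso θ
    rwa [hθ, one_pow] at h
  have hIntμ : Integrable (fun y => ℓ y ^ 2)
      (volume.withDensity fun z => ENNReal.ofReal (ρ z)) := by
    by_contra hni
    rw [integral_undef hni] at hvar
    exact one_ne_zero hvar.symm
  have hlintμ : ∫⁻ y, ENNReal.ofReal (ℓ y ^ 2)
      ∂(volume.withDensity fun z => ENNReal.ofReal (ρ z)) = 1 := by
    rw [← ofReal_integral_eq_lintegral_ofReal hIntμ (ae_of_all _ fun y => sq_nonneg _), hvar,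
      ENNReal.ofReal_one]
  have hwd : ∫⁻ y, ENNReal.ofReal (ρ y) * ENNReal.ofReal (ℓ y ^ 2) ∂volume = 1 := by
    rw [← hlintμ, lintegral_withDensity_eq_lintegral_mul₀ hρae.ennreal_ofReal
      ((by fun_prop : Measurable fun y => ENNReal.ofReal (ℓ y ^ 2)).aemeasurable)]
    rfl
  have hlK2 : ∫⁻ y in K, ENNReal.ofReal (ℓ y ^ 2) ∂volume ≤ ENNReal.ofReal (exp τ / m) := by
    have hpt : ∀ y ∈ K, ENNReal.ofReal (ℓ y ^ 2)
        ≤ ENNReal.ofReal (exp τ / m) * (ENNReal.ofReal (ρ y) * ENNReal.ofReal (ℓ y ^ 2)) := by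
      intro y hy
      rw [← ENNReal.ofReal_mul (hnn y), ← ENNReal.ofReal_mul (div_pos (exp_pos τ) hm).le]
      apply ENNReal.ofReal_le_ofReal
      have h1 : exp (-τ) * m ≤ ρ y := hy
      have h2 : 1 ≤ exp τ / m * ρ y := by
        have h3 : exp τ / m * (exp (-τ) * m) ≤ exp τ / m * ρ y :=
          mul_le_mul_of_nonneg_left h1 (by positivity)
        have h4 : exp τ / m * (exp (-τ) * m) = 1 := by
          field_simp
          rw [hee]
        linarith
      nlinarith [sq_nonneg (ℓ y)]
    calc ∫⁻ y in K, ENNReal.ofReal (ℓ y ^ 2) ∂volume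
        ≤ ∫⁻ y in K, ENNReal.ofReal (exp τ / m)
            * (ENNReal.ofReal (ρ y) * ENNReal.ofReal (ℓ y ^ 2)) ∂volume := by
          apply lintegral_mono_ae
          filter_upwards [ae_restrict_mem₀ hKnm] with y hy using hpt y hy
      _ = ENNReal.ofReal (exp τ / m)
            * ∫⁻ y in K, ENNReal.ofReal (ρ y) * ENNReal.ofReal (ℓ y ^ 2) ∂volume :=
          lintegral_const_mul' _ _ ENNReal.ofReal_ne_top
      _ ≤ ENNReal.ofReal (exp τ / m)
            * ∫⁻ y, ENNReal.ofReal (ρ y) * ENNReal.ofReal (ℓ y ^ 2) ∂volume := by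
          gcongr
          exact Measure.restrict_le_self
      _ = ENNReal.ofReal (exp τ / m) := by rw [hwd, mul_one]
  -- integrability on K
  have hIntK2 : IntegrableOn (fun y => ℓ y ^ 2) K volume := by
    constructor
    · exact ((hcont.pow 2).aestronglyMeasurable)
    · rw [hasFiniteIntegral_iff_ofReal (ae_of_all _ fun y => sq_nonneg _)]
      exact lt_of_le_of_lt hlK2 ENNReal.ofReal_lt_top
  have hIntK0 : IntegrableOn (fun _ => (1:ℝ)) K volume :=
    integrableOn_const hVlt.ne
  have hIntK1 : IntegrableOn ℓ K volume := by
    apply Integrable.mono' (hIntK0.add hIntK2) hcont.aestronglyMeasurable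
    refine ae_of_all _ fun y => ?_
    have : |ℓ y| ≤ 1 + ℓ y ^ 2 := by nlinarith [sq_nonneg (|ℓ y| - 1), sq_abs (ℓ y)]
    simpa [Real.norm_eq_abs] using this
  set I1 : ℝ := ∫ y in K, ℓ y ∂volume with hI1def
  set I2 : ℝ := ∫ y in K, ℓ y ^ 2 ∂volume with hI2def
  have hI2nonneg : 0 ≤ I2 := integral_nonneg (fun y => sq_nonneg _)
  have hI2le : I2 ≤ exp τ / m := by
    have h := ofReal_integral_eq_lintegral_ofReal hIntK2 (ae_of_all _ fun y => sq_nonneg _)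
    have h2 : ENNReal.ofReal I2 ≤ ENNReal.ofReal (exp τ / m) := le_trans (le_of_eq h) hlK2
    exact (ENNReal.ofReal_le_ofReal_iff (by positivity)).mp h2
  -- expansion helper
  have hVr_eq : ∀ c : ℝ, ∫ _ in K, c ∂volume = c * Vr := by
    intro c
    rw [setIntegral_const, smul_eq_mul, measureReal_def, ← hVdef, ← hVrdef]
    ring
  have hexp_gen : ∀ d e f : ℝ,
      ∫ y in K, (d + e * ℓ y + f * ℓ y ^ 2) ∂volume = d * Vr + e * I1 + f * I2 := by
    intro d e f
    have hintc : IntegrableOn (fun _ => d) K volume := integrableOn_const hVlt.ne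
    have hint1 : IntegrableOn (fun y => d + e * ℓ y) K volume := hintc.add (hIntK1.const_mul e)
    have e1 := integral_add (μ := volume.restrict K) hint1 (hIntK2.const_mul f)
    have e2 := integral_add (μ := volume.restrict K) hintc (hIntK1.const_mul e)
    rw [e1, e2, hVr_eq d, integral_const_mul, integral_const_mul]
  -- Cauchy–Schwarz
  have hCS : I1 ^ 2 ≤ I2 * Vr := by
    have hptw : ∀ y, (0:ℝ) ≤ (I1/Vr)^2 + (-2*(I1/Vr)) * ℓ y + 1 * ℓ y ^ 2 := fun y => by
      nlinarith [sq_nonneg (ℓ y - I1/Vr)]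
    have h0 : (0:ℝ) ≤ ∫ y in K, ((I1/Vr)^2 + (-2*(I1/Vr)) * ℓ y + 1 * ℓ y ^ 2) ∂volume :=
      integral_nonneg hptw
    rw [hexp_gen] at h0
    have h5 := mul_nonneg h0 hVr_pos.le
    have e3 : (I1/Vr)^2 * Vr * Vr = I1^2 := by field_simp
    have e5 : (I1/Vr) * I1 * Vr = I1^2 := by field_simp
    nlinarith [h5, e3, e5]
  -- scaling inequality
  obtain ⟨K₀, hK₀sub, hK₀meas, hK₀ae⟩ := hKnm.exists_measurable_subset_ae_eq
  have hscale : ∀ s : ℝ, 0 < s → s < 1 → ∀ c : ℝ,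
      s ^ n * (((1-s)*r - c)^2 * Vr + 2*((1-s)*r - c)*s*I1 + s^2*I2)
        ≤ I2 - 2*c*I1 + c^2*Vr := by
    intro s hs0 hs1 c
    set T : EuclideanSpace ℝ (Fin n) → EuclideanSpace ℝ (Fin n) :=
      fun y => x + s • (y - x) with hTdef
    have hTK : ∀ y ∈ K, T y ∈ K := by
      intro y hy
      have hmem := hKconv hxK hy (by linarith : (0:ℝ) ≤ 1 - s) hs0.le (by ring)
      have he : T y = (1-s) • x + s • y := by
        rw [hTdef]
        simp only [smul_sub, sub_smul, one_smul]
        abel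
      rw [he]
      exact hmem
    have hTder : ∀ y ∈ K₀, HasFDerivWithinAt T
        (s • (1 : EuclideanSpace ℝ (Fin n) →L[ℝ] EuclideanSpace ℝ (Fin n))) K₀ y := by
      intro y _
      have h1 : HasFDerivAt (fun y : EuclideanSpace ℝ (Fin n) => y - x)
          (1 : EuclideanSpace ℝ (Fin n) →L[ℝ] EuclideanSpace ℝ (Fin n)) y :=
        (hasFDerivAt_id y).sub_const x
      have h2 := (h1.const_smul s).const_add x
      exact h2.hasFDerivWithinAt
    have hTinj : Set.InjOn T K₀ := by
      intro y1 _ y2 _ h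
      have h1 : s • (y1 - x) = s • (y2 - x) := by
        have := h
        rw [hTdef] at this
        simpa using this
      have h2 : y1 - x = y2 - x := smul_right_injective _ (ne_of_gt hs0) h1
      have := sub_left_injective h2
      exact this
    have hdet : |((s • (1 : EuclideanSpace ℝ (Fin n) →L[ℝ] EuclideanSpace ℝ (Fin n)))).det| = s^n := by
      unfold ContinuousLinearMap.det
      rw [ContinuousLinearMap.coe_smul, ContinuousLinearMap.one_def, ContinuousLinearMap.coe_id,
        LinearMap.det_smul, LinearMap.det_id, finrank_euclideanSpace_fin, mul_one,
        abs_of_nonneg (pow_nonneg hs0.le _)]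
    have hℓT : ∀ y, ℓ (T y) = (1-s)*r + s * ℓ y := by
      intro y
      rw [hTdef, hℓdef]
      show ⟪x + s • (y - x), θ⟫ = (1-s)*r + s * ⟪y, θ⟫
      rw [inner_add_left, real_inner_smul_left, inner_sub_left]
      have : ⟪x, θ⟫ = r := hlx
      rw [this]
      ring
    have hIntKc : IntegrableOn (fun y => (ℓ y - c)^2) K volume := by
      have h1 : IntegrableOn (fun y => c^2 + (-2*c) * ℓ y + 1 * ℓ y ^ 2) K volume :=
        ((integrableOn_const hVlt.ne).add (hIntK1.const_mul (-2*c))).add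
          (hIntK2.const_mul 1)
      exact h1.congr (ae_of_all _ (fun y => by ring))
    have h2 : ∫ y in T '' K₀, (ℓ y - c)^2 ∂volume
        = ∫ y in K₀, s^n * ((ℓ (T y)) - c)^2 ∂volume := by
      rw [integral_image_eq_integral_abs_det_fderiv_smul volume hK₀meas hTder hTinj
        (fun z => (ℓ z - c)^2)]
      apply setIntegral_congr_fun hK₀meas
      intro y _
      simp only [hdet, smul_eq_mul]
    have h1 : ∫ y in T '' K₀, (ℓ y - c)^2 ∂volume ≤ ∫ y in K, (ℓ y - c)^2 ∂volume := by
      apply setIntegral_mono_set hIntKc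
      · filter_upwards with y using sq_nonneg _
      · have hsub : T '' K₀ ⊆ K := by
          rintro z ⟨y, hy, rfl⟩
          exact hTK y (hK₀sub hy)
        exact HasSubset.Subset.eventuallyLE hsub
    have h3 : ∫ y in K₀, s^n * ((ℓ (T y)) - c)^2 ∂volume
        = s^n * ∫ y in K, ((1-s)*r + s*ℓ y - c)^2 ∂volume := by
      rw [setIntegral_congr_set hK₀ae]
      rw [← integral_const_mul]
      apply integral_congr_ae
      filter_upwards with y
      rw [hℓT y]
    have h4 : ∫ y in K, ((1-s)*r + s*ℓ y - c)^2 ∂volume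
        = ((1-s)*r - c)^2 * Vr + 2*((1-s)*r-c)*s*I1 + s^2*I2 := by
      have he : ∀ y, ((1-s)*r + s*ℓ y - c)^2
          = (((1-s)*r - c)^2) + (2*((1-s)*r-c)*s) * ℓ y + (s^2) * ℓ y^2 := fun y => by ring
      rw [integral_congr_ae (ae_of_all _ he), hexp_gen]
    have h5 : ∫ y in K, (ℓ y - c)^2 ∂volume = I2 - 2*c*I1 + c^2*Vr := by
      have he : ∀ y, (ℓ y - c)^2 = c^2 + (-2*c) * ℓ y + 1 * ℓ y^2 := fun y => by ring
      rw [integral_congr_ae (ae_of_all _ he), hexp_gen]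
      ring
    rw [← h4, ← h5]
    calc s^n * ∫ y in K, ((1-s)*r + s*ℓ y - c)^2 ∂volume
        = ∫ y in T '' K₀, (ℓ y - c)^2 ∂volume := by rw [h2, h3]
      _ ≤ ∫ y in K, (ℓ y - c)^2 ∂volume := h1
  have halg := alg_key n hn r Vr I1 I2 hVr_pos hCS hscale
  -- final arithmetic
  have h1 : r^2 * Vr ≤ ((n:ℝ)+1)^2 * (exp τ / m) :=
    le_trans halg (mul_le_mul_of_nonneg_left hI2le (by positivity))
  have h2 : r^2 ≤ r^2 * (m * cN n τ * Vr) := le_mul_of_one_le_right (sq_nonneg r) hmcV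
  have h3 : r^2 * (m * cN n τ * Vr) = (r^2 * Vr) * (m * cN n τ) := by ring
  have h4 : (r^2*Vr) * (m * cN n τ) ≤ (((n:ℝ)+1)^2 * (exp τ/m)) * (m * cN n τ) :=
    mul_le_mul_of_nonneg_right h1 (by positivity)
  have h5 : (((n:ℝ)+1)^2 * (exp τ/m)) * (m * cN n τ) = cN n τ * ((n:ℝ)+1)^2 * exp τ := by
    field_simp
  calc ‖x‖ ^ 2 = r ^ 2 := by rw [hrdef]
    _ ≤ cN n τ * ((n:ℝ)+1)^2 * exp τ := by linarith


end helperLemmas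

theorem stmt6 (n : ℕ) (ρ : EuclideanSpace ℝ (Fin n) → ℝ) (m τ : ℝ) (hτ : 0 < τ)
    (hρ : LogConcaveFun ρ) (hmax : IsGreatest (Set.range ρ) m)
    (hprob : IsProbabilityMeasure (volume.withDensity fun x => ENNReal.ofReal (ρ x)))
    (hiso : IsIsotropicOne (volume.withDensity fun x => ENNReal.ofReal (ρ x))) :
    ∀ x : EuclideanSpace ℝ (Fin n), exp (-τ) * m ≤ ρ x →
      ‖x‖ ^ 2 ≤ cN n τ * (n + 1) ^ 2 * exp τ := by
  intro x hx
  exact stmt6_main n ρ m τ hτ hρ hmax hprob hiso.2 x hx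
end
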